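/- arXiv:2209.09587 — 8 statements merged into one kernel-verified Lean document; each statement's English description precedes it below -/
import Mathlib

section
/- Let T be a bounded linear operator on a Banach space X. Then T is positively expansive if and only if sup_{n∈ℕ} ‖T^n x‖ = ∞ for every nonzero x ∈ X. -/
/-!
By homogeneity, expansion of unit vectors by a factor `c > 1` gives, for every `x ≠ 0`, a power
of `T` with `‖T^n x‖ ≥ c ‖x‖`. Applying this again to `T^n x ≠ 0` and iterating, the orbit of `x`
reaches norm `c^k ‖x‖` for every `k`, hence is unbounded.
-/

namespace ContinuousLinearMap

variable {E : Type*} [NormedAddCommGroup E] [NormedSpace ℝ E] {T : E →L[ℝ] E} {c : ℝ}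

theorem exists_mul_norm_le_norm_pow_apply (h : ∀ x : E, ‖x‖ = 1 → ∃ n : ℕ, c ≤ ‖(T ^ n) x‖)
    {x : E} (hx : x ≠ 0) : ∃ n : ℕ, c * ‖x‖ ≤ ‖(T ^ n) x‖ := by
  have hx_pos : 0 < ‖x‖ := norm_pos_iff.mpr hx
  obtain ⟨n, hn⟩ := h (‖x‖⁻¹ • x) (norm_smul_inv_norm hx)
  refine ⟨n, ?_⟩
  rwa [map_smul, norm_smul, norm_inv, norm_norm, inv_mul_eq_div, le_div_iff₀ hx_pos] at hn

theorem exists_pow_mul_norm_le_norm_pow_apply (hc : 1 < c)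
    (h : ∀ x : E, ‖x‖ = 1 → ∃ n : ℕ, c ≤ ‖(T ^ n) x‖) {x : E} (hx : x ≠ 0) (k : ℕ) :
    ∃ n : ℕ, c ^ k * ‖x‖ ≤ ‖(T ^ n) x‖ := by
  induction k with
  | zero => exact ⟨0, by simp⟩
  | succ k ih =>
    obtain ⟨n, hn⟩ := ih
    have hTn : (T ^ n) x ≠ 0 := by
      rw [← norm_pos_iff]
      exact (mul_pos (pow_pos (zero_lt_one.trans hc) k) (norm_pos_iff.mpr hx)).trans_le hn
    obtain ⟨m, hm⟩ := exists_mul_norm_le_norm_pow_apply h hTn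
    refine ⟨m + n, ?_⟩
    calc c ^ (k + 1) * ‖x‖ = c * (c ^ k * ‖x‖) := by ring
      _ ≤ c * ‖(T ^ n) x‖ := by gcongr
      _ ≤ ‖(T ^ m) ((T ^ n) x)‖ := hm
      _ = ‖(T ^ (m + n)) x‖ := by rw [pow_add, mul_apply_eq_comp]

theorem exists_le_norm_pow_apply (hc : 1 < c)
    (h : ∀ x : E, ‖x‖ = 1 → ∃ n : ℕ, c ≤ ‖(T ^ n) x‖) {x : E} (hx : x ≠ 0) (M : ℝ) :
    ∃ n : ℕ, M ≤ ‖(T ^ n) x‖ := by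
  obtain ⟨k, hk⟩ := pow_unbounded_of_one_lt (M / ‖x‖) hc
  obtain ⟨n, hn⟩ := exists_pow_mul_norm_le_norm_pow_apply hc h hx k
  rw [div_lt_iff₀ (norm_pos_iff.mpr hx)] at hk
  exact ⟨n, hk.le.trans hn⟩

end ContinuousLinearMap

theorem positivelyExpansive_iff_sup_eq_top_general {E : Type*} [NormedAddCommGroup E]
    [NormedSpace ℝ E] (T : E →L[ℝ] E) :
    (∀ x : E, ‖x‖ = 1 → ∃ n : ℕ, 2 ≤ ‖(T ^ n) x‖) ↔
      (∀ x : E, x ≠ 0 → ∀ M : ℝ, ∃ n : ℕ, M ≤ ‖(T ^ n) x‖) := by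
  refine ⟨fun h x hx M => T.exists_le_norm_pow_apply one_lt_two h hx M, fun h x hx => ?_⟩
  exact h x (norm_ne_zero_iff.mp (by simp [hx])) 2

/-- a bounded operator `T` on a Banach space is positively expansive
(for every `x` with `‖x‖ = 1` there is `n ∈ ℕ` with `‖T^n x‖ ≥ 2`) if and only if
`sup_{n ∈ ℕ} ‖T^n x‖ = ∞` for every nonzero `x`. -/
theorem positivelyExpansive_iff_sup_eq_top {E : Type*} [NormedAddCommGroup E]
    [NormedSpace ℝ E] [CompleteSpace E] (T : E →L[ℝ] E) :
    (∀ x : E, ‖x‖ = 1 → ∃ n : ℕ, 2 ≤ ‖(T ^ n) x‖) ↔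
      (∀ x : E, x ≠ 0 → ∀ M : ℝ, ∃ n : ℕ, M ≤ ‖(T ^ n) x‖) :=
  positivelyExpansive_iff_sup_eq_top_general T
end

section
/- Let T be an invertible bounded linear operator on a Banach space X. Then T is expansive if and only if sup_{n∈ℤ} ‖T^n x‖ = ∞ for every nonzero x ∈ X. -/
/-! By homogeneity, expansivity says that every `x` has a power `T ^ n` with `‖T ^ n x‖ ≥ 2 ‖x‖`;
applying this again to `T ^ n x` and iterating gives powers with `‖T ^ n x‖ ≥ 2 ^ k ‖x‖` for every `k`. -/

section Expansive

variable {𝕜 E : Type*} [RCLike 𝕜] [NormedAddCommGroup E] [NormedSpace 𝕜 E] (T : E ≃L[𝕜] E)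

theorem exists_two_mul_norm_le_norm_zpow_apply
    (hT : ∀ x : E, ‖x‖ = 1 → ∃ n : ℤ, 2 ≤ ‖(T ^ n) x‖) (x : E) :
    ∃ n : ℤ, 2 * ‖x‖ ≤ ‖(T ^ n) x‖ := by
  rcases eq_or_ne x 0 with rfl | hx
  · exact ⟨0, by simp⟩
  obtain ⟨n, hn⟩ := hT _ (norm_smul_inv_norm (𝕜 := 𝕜) hx)
  refine ⟨n, ?_⟩
  rw [map_smul, norm_smul, norm_inv, RCLike.norm_ofReal, abs_norm,
    ← div_eq_inv_mul, le_div_iff₀ (norm_pos_iff.mpr hx)] at hn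
  exact hn

theorem exists_two_pow_mul_norm_le_norm_zpow_apply
    (hT : ∀ x : E, ‖x‖ = 1 → ∃ n : ℤ, 2 ≤ ‖(T ^ n) x‖) (x : E) (k : ℕ) :
    ∃ n : ℤ, 2 ^ k * ‖x‖ ≤ ‖(T ^ n) x‖ := by
  induction k with
  | zero => exact ⟨0, by rw [pow_zero, one_mul, zpow_zero]; rfl⟩
  | succ k ih =>
    obtain ⟨n, hn⟩ := ih
    obtain ⟨m, hm⟩ := exists_two_mul_norm_le_norm_zpow_apply T hT ((T ^ n) x)
    refine ⟨m + n, ?_⟩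
    calc 2 ^ (k + 1) * ‖x‖ = 2 * (2 ^ k * ‖x‖) := by ring
      _ ≤ 2 * ‖(T ^ n) x‖ := by gcongr
      _ ≤ ‖(T ^ (m + n)) x‖ := by rwa [zpow_add]

end Expansive

theorem expansive_iff_sup_eq_top_general {E : Type*} [NormedAddCommGroup E]
    [NormedSpace ℝ E] (T : E ≃L[ℝ] E) :
    (∀ x : E, ‖x‖ = 1 → ∃ n : ℤ, 2 ≤ ‖(T ^ n) x‖) ↔
      (∀ x : E, x ≠ 0 → ∀ M : ℝ, ∃ n : ℤ, M ≤ ‖(T ^ n) x‖) := by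
  refine ⟨fun hT x hx M => ?_, fun h x hx => h x (norm_ne_zero_iff.mp (by simp [hx])) 2⟩
  have hx' : 0 < ‖x‖ := norm_pos_iff.mpr hx
  obtain ⟨k, hk⟩ := pow_unbounded_of_one_lt (M / ‖x‖) one_lt_two
  obtain ⟨n, hn⟩ := exists_two_pow_mul_norm_le_norm_zpow_apply T hT x k
  exact ⟨n, ((div_lt_iff₀ hx').mp hk).le.trans hn⟩

/-- an invertible bounded operator `T` on a Banach space is expansive
(for every `x` with `‖x‖ = 1` there is `n ∈ ℤ` with `‖T^n x‖ ≥ 2`) if and only if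
`sup_{n ∈ ℤ} ‖T^n x‖ = ∞` for every nonzero `x`. -/
theorem expansive_iff_sup_eq_top {E : Type*} [NormedAddCommGroup E]
    [NormedSpace ℝ E] [CompleteSpace E] (T : E ≃L[ℝ] E) :
    (∀ x : E, ‖x‖ = 1 → ∃ n : ℤ, 2 ≤ ‖(T ^ n) x‖) ↔
      (∀ x : E, x ≠ 0 → ∀ M : ℝ, ∃ n : ℤ, M ≤ ‖(T ^ n) x‖) :=
  expansive_iff_sup_eq_top_general T
end

section
/- Let T be a bounded linear operator on a Banach space X. Then T is uniformly positively expansive if and only if ‖T^n x‖ → ∞ as n → ∞ uniformly on the unit sphere S_X, i.e., for every M > 0 there exists N such that ‖T^n x‖ ≥ M for all n ≥ N and all x with ‖x‖ = 1. -/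
/-!
By homogeneity, `‖T ^ n x‖ ≥ 2` on the unit sphere means `‖T ^ n x‖ ≥ 2 ‖x‖` everywhere, so
`‖T ^ (n q) x‖ ≥ 2 ^ q ‖x‖`. An arbitrary exponent `m` lies at most `n` below a multiple of `n`,
and the missing iterates can shrink the norm at most by the factor `∑_{j ≤ n} ‖T ^ j‖`, which is
beaten by `2 ^ q` for large `q`. The converse is the case `M = 2`.
-/

namespace ContinuousLinearMap

theorem mul_norm_le_norm_apply_of_forall_norm_eq_one {𝕜 E F : Type*} [RCLike 𝕜]
    [NormedAddCommGroup E] [NormedSpace 𝕜 E] [SeminormedAddCommGroup F] [NormedSpace 𝕜 F]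
    {f : E →L[𝕜] F} {c : ℝ} (h : ∀ x, ‖x‖ = 1 → c ≤ ‖f x‖) (x : E) : c * ‖x‖ ≤ ‖f x‖ := by
  rcases eq_or_ne x 0 with rfl | hx
  · simp
  have hunit := h _ (norm_smul_inv_norm (𝕜 := 𝕜) hx)
  rw [map_smul, norm_smul, norm_inv, RCLike.norm_coe_norm, inv_mul_eq_div,
    le_div_iff₀ (norm_pos_iff.mpr hx)] at hunit
  exact hunit

variable {𝕜 E : Type*} [NontriviallyNormedField 𝕜] [SeminormedAddCommGroup E] [NormedSpace 𝕜 E]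

theorem pow_mul_norm_le_norm_pow_apply {T : E →L[𝕜] E} {c : ℝ} (hc : 0 ≤ c)
    (h : ∀ x, c * ‖x‖ ≤ ‖T x‖) (k : ℕ) (x : E) : c ^ k * ‖x‖ ≤ ‖(T ^ k) x‖ := by
  induction k generalizing x with
  | zero => simp
  | succ k ih =>
    calc c ^ (k + 1) * ‖x‖ = c ^ k * (c * ‖x‖) := by ring
      _ ≤ c ^ k * ‖T x‖ := by gcongr; exact h x
      _ ≤ ‖(T ^ (k + 1)) x‖ := ih (T x)

theorem norm_pow_apply_le_mul_norm_pow_apply (T : E →L[𝕜] E) {j l : ℕ} (hjl : j ≤ l) (x : E) :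
    ‖(T ^ l) x‖ ≤ ‖T ^ (l - j)‖ * ‖(T ^ j) x‖ := by
  rw [← pow_sub_mul_pow T hjl, mul_apply_eq_comp]
  exact le_opNorm _ _

theorem exists_forall_le_norm_pow_apply_of_one_lt {T : E →L[𝕜] E} {n : ℕ} {c : ℝ}
    (hn : 0 < n) (hc : 1 < c) (h : ∀ x, c * ‖x‖ ≤ ‖(T ^ n) x‖) (M : ℝ) :
    ∃ N, ∀ m, N ≤ m → ∀ x : E, ‖x‖ = 1 → M ≤ ‖(T ^ m) x‖ := by
  set C := ∑ j ∈ Finset.range (n + 1), ‖T ^ j‖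
  have hC : ∀ j ≤ n, ‖T ^ j‖ ≤ C := fun j hj =>
    Finset.single_le_sum (fun i _ => norm_nonneg (T ^ i)) (Finset.mem_range_succ_iff.mpr hj)
  obtain ⟨k, hk⟩ := pow_unbounded_of_one_lt (M * C) hc
  refine ⟨n * k, fun m hm x hx => ?_⟩
  -- Overshoot `m` to the next multiple `l` of `n`, where the expansion is known.
  set l := n * (m / n + 1)
  have hml : m ≤ l := (Nat.lt_mul_div_succ m hn).le
  have hkq : k ≤ m / n + 1 :=
    ((Nat.le_div_iff_mul_le hn).mpr (by rwa [mul_comm] at hm)).trans (Nat.le_succ _)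
  have hexp : c ^ (m / n + 1) ≤ ‖(T ^ l) x‖ := by
    have := pow_mul_norm_le_norm_pow_apply (T := T ^ n) (by linarith) h (m / n + 1) x
    rwa [hx, mul_one, ← pow_mul] at this
  have hlm : l - m ≤ n := by
    have := Nat.div_add_mod m n
    simp only [l, mul_add, mul_one]
    omega
  have hMC : M * C < ‖(T ^ m) x‖ * C :=
    calc M * C < c ^ k := hk
      _ ≤ c ^ (m / n + 1) := pow_le_pow_right₀ hc.le hkq
      _ ≤ ‖T ^ (l - m)‖ * ‖(T ^ m) x‖ :=
        hexp.trans (norm_pow_apply_le_mul_norm_pow_apply T hml x)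
      _ ≤ ‖(T ^ m) x‖ * C := by rw [mul_comm]; gcongr; exact hC _ hlm
  exact (lt_of_mul_lt_mul_right hMC (Finset.sum_nonneg fun i _ => norm_nonneg (T ^ i))).le

end ContinuousLinearMap

open ContinuousLinearMap in
theorem uniformlyPositivelyExpansive_iff_general {E : Type*} [NormedAddCommGroup E]
    [NormedSpace ℝ E] (T : E →L[ℝ] E) :
    (∃ n : ℕ, ∀ x : E, ‖x‖ = 1 → 2 ≤ ‖(T ^ n) x‖) ↔
      (∀ M : ℝ, 0 < M → ∃ N : ℕ, ∀ n : ℕ, N ≤ n → ∀ x : E, ‖x‖ = 1 →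
        M ≤ ‖(T ^ n) x‖) := by
  constructor
  · rintro ⟨n, hn⟩ M -
    rcases n.eq_zero_or_pos with rfl | hpos
    · refine ⟨0, fun _ _ x hx => absurd (hn x hx) ?_⟩
      norm_num [hx]
    · exact exists_forall_le_norm_pow_apply_of_one_lt hpos one_lt_two
        (mul_norm_le_norm_apply_of_forall_norm_eq_one hn) M
  · intro h
    obtain ⟨N, hN⟩ := h 2 two_pos
    exact ⟨N, hN N le_rfl⟩

/-- a bounded operator `T` on a Banach space is uniformly positively
expansive (there is `n ∈ ℕ` with `‖T^n x‖ ≥ 2` for all `x` in the unit sphere)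
if and only if `‖T^n x‖ → ∞` uniformly on the unit sphere. -/
theorem uniformlyPositivelyExpansive_iff {E : Type*} [NormedAddCommGroup E]
    [NormedSpace ℝ E] [CompleteSpace E] (T : E →L[ℝ] E) :
    (∃ n : ℕ, ∀ x : E, ‖x‖ = 1 → 2 ≤ ‖(T ^ n) x‖) ↔
      (∀ M : ℝ, 0 < M → ∃ N : ℕ, ∀ n : ℕ, N ≤ n → ∀ x : E, ‖x‖ = 1 →
        M ≤ ‖(T ^ n) x‖) :=
  uniformlyPositivelyExpansive_iff_general T
end

section
/- Let (X,𝓕,μ) be a σ-finite measure space and φ: X → X a nonsingular measurable transformation such that μ(φ^{-1}(A)) ≤ c·μ(A) for all A ∈ 𝓕 and some constant c > 0. Then the composition operator C_φ f = f∘φ is a bounded linear operator on the Orlicz space L^Φ(μ), provided Φ ∈ Δ' (i.e., Φ(xy) ≤ k Φ(x)Φ(y) globally for some k > 0) or more generally Φ(x/c') ≤ Φ(x)/c for suitable constants. -/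
open MeasureTheory ENNReal Filter Set Topology

noncomputable section

/-- A Young function `Φ : ℝ → [0,∞]`: convex, even, `Φ 0 = 0`, `Φ x → ∞` as `x → ∞`. -/
structure IsYoungFunction (Φ : ℝ → ℝ≥0∞) : Prop where
  convexity : ∀ x y t : ℝ, 0 ≤ t → t ≤ 1 →
    Φ (t * x + (1 - t) * y) ≤ ENNReal.ofReal t * Φ x + ENNReal.ofReal (1 - t) * Φ y
  even : ∀ x : ℝ, Φ (-x) = Φ x
  map_zero : Φ 0 = 0
  tendsto_top : Filter.Tendsto Φ Filter.atTop (nhds ⊤)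

/-- Generalized inverse of a Young function restricted to `[0,∞)`. -/
def PhiInv (Φ : ℝ → ℝ≥0∞) (y : ℝ≥0∞) : ℝ :=
  sSup {x : ℝ | 0 ≤ x ∧ Φ x ≤ y}

/-- The Luxemburg (gauge) norm on the Orlicz space `L^Φ(μ)`. -/
def LuxNorm {X : Type*} [MeasurableSpace X] (Φ : ℝ → ℝ≥0∞) (μ : Measure X)
    (f : X → ℝ) : ℝ :=
  sInf {k : ℝ | 0 < k ∧ (∫⁻ x, Φ (f x / k) ∂μ) ≤ 1}

/-- Membership in the Orlicz space `L^Φ(μ)`. -/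
def MemOrlicz {X : Type*} [MeasurableSpace X] (Φ : ℝ → ℝ≥0∞) (μ : Measure X)
    (f : X → ℝ) : Prop :=
  Measurable f ∧ ∃ k : ℝ, 0 < k ∧ (∫⁻ x, Φ (k * f x) ∂μ) < ⊤

/-- The `Δ₂`-condition: `Φ(2x) ≤ K Φ(x)` for `x ≥ x₀`, for some `K > 0`, `x₀ > 0`. -/
def DeltaTwo (Φ : ℝ → ℝ≥0∞) : Prop :=
  ∃ K : ℝ, 0 < K ∧ ∃ x₀ : ℝ, 0 < x₀ ∧ ∀ x : ℝ, x₀ ≤ x → Φ (2 * x) ≤ ENNReal.ofReal K * Φ x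

/-- The global `Δ'`-condition: `Φ(xy) ≤ c Φ(x) Φ(y)` for all `x, y ≥ 0`, for some `c > 0`. -/
def DeltaPrime (Φ : ℝ → ℝ≥0∞) : Prop :=
  ∃ c : ℝ, 0 < c ∧ ∀ x y : ℝ, 0 ≤ x → 0 ≤ y → Φ (x * y) ≤ ENNReal.ofReal c * Φ x * Φ y

/-! ### Auxiliary lemmas about Young functions -/

theorem young_scale {Φ : ℝ → ℝ≥0∞} (hΦ : IsYoungFunction Φ) (t z : ℝ)
    (ht0 : 0 ≤ t) (ht1 : t ≤ 1) : Φ (t * z) ≤ ENNReal.ofReal t * Φ z := by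
  have h := hΦ.convexity z 0 t ht0 ht1
  simpa [hΦ.map_zero] using h

theorem young_abs {Φ : ℝ → ℝ≥0∞} (hΦ : IsYoungFunction Φ) (z : ℝ) : Φ |z| = Φ z := by
  rcases abs_cases z with ⟨h, _⟩ | ⟨h, _⟩
  · rw [h]
  · rw [h, hΦ.even]

theorem young_mono {Φ : ℝ → ℝ≥0∞} (hΦ : IsYoungFunction Φ) {x y : ℝ}
    (hx : 0 ≤ x) (hxy : x ≤ y) : Φ x ≤ Φ y := by
  rcases eq_or_lt_of_le (hx.trans hxy) with hy | hy
  · have hx0 : x = 0 := le_antisymm (hxy.trans_eq hy.symm) hx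
    rw [hx0, ← hy]
  · have ht0 : 0 ≤ x / y := div_nonneg hx hy.le
    have ht1 : x / y ≤ 1 := (div_le_one hy).2 hxy
    have h := young_scale hΦ (x / y) y ht0 ht1
    rw [div_mul_cancel₀ _ hy.ne'] at h
    refine h.trans ?_
    calc ENNReal.ofReal (x / y) * Φ y ≤ 1 * Φ y := by
          gcongr
          exact ENNReal.ofReal_le_one.mpr ht1
      _ = Φ y := one_mul _

theorem young_measurable {Φ : ℝ → ℝ≥0∞} (hΦ : IsYoungFunction Φ) : Measurable Φ := by
  have hmono : Monotone (fun x : ℝ => Φ (max x 0)) := fun x y hxy =>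
    young_mono hΦ (le_max_right x 0) (max_le_max hxy le_rfl)
  have heq : Φ = (fun x : ℝ => Φ (max x 0)) ∘ (fun z : ℝ => |z|) := by
    funext z
    simp only [Function.comp]
    rw [max_eq_left (abs_nonneg z), young_abs hΦ]
  rw [heq]
  exact hmono.measurable.comp measurable_abs

/-- Choosing a small scalar `s ∈ (0,1]` with `s·I ≤ 1`. -/
theorem small_scalar (I : ℝ≥0∞) (hI : I ≠ ⊤) :
    ∃ s : ℝ, 0 < s ∧ s ≤ 1 ∧ ENNReal.ofReal s * I ≤ 1 := by
  have hIpos : (0 : ℝ) < I.toReal + 1 := by positivity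
  set s : ℝ := min 1 (I.toReal + 1)⁻¹ with hs_def
  have hs0 : 0 < s := lt_min one_pos (by positivity)
  have hkey : s * I.toReal ≤ 1 := by
    calc s * I.toReal ≤ (I.toReal + 1)⁻¹ * I.toReal :=
          mul_le_mul_of_nonneg_right (min_le_right _ _) ENNReal.toReal_nonneg
      _ ≤ 1 := by
          rw [inv_mul_le_iff₀ hIpos]
          linarith
  refine ⟨s, hs0, min_le_left _ _, ?_⟩
  rw [← ENNReal.ofReal_toReal hI, ← ENNReal.ofReal_mul hs0.le]
  exact ENNReal.ofReal_le_one.2 hkey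

/-- if `μ(φ⁻¹(A)) ≤ c·μ(A)` and `Φ ∈ Δ'` globally, then the composition
operator `C_φ f = f ∘ φ` is a well-defined bounded linear operator on `L^Φ(μ)`. -/
theorem compositionOperator_bounded {X : Type*} [MeasurableSpace X] (μ : Measure X)
    [SigmaFinite μ] (Φ : ℝ → ℝ≥0∞) (hΦ : IsYoungFunction Φ) (hΔ' : DeltaPrime Φ)
    (φ : X → X) (hφ : Measurable φ) (c : ℝ≥0∞) (hc : 0 < c) (hc' : c < ⊤)
    (hbound : ∀ A : Set X, MeasurableSet A → μ (φ ⁻¹' A) ≤ c * μ A) :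
    ∃ M : ℝ, 0 < M ∧ ∀ f : X → ℝ, MemOrlicz Φ μ f →
      MemOrlicz Φ μ (f ∘ φ) ∧ LuxNorm Φ μ (f ∘ φ) ≤ M * LuxNorm Φ μ f := by
  obtain ⟨c', hc'pos, hΔ⟩ := hΔ'
  have hΦm : Measurable Φ := young_measurable hΦ
  -- change of variables estimate
  have hmap : μ.map φ ≤ c • μ := by
    refine Measure.le_iff.2 fun s hs => ?_
    rw [Measure.map_apply hφ hs]
    simpa using hbound s hs
  have hkey : ∀ h : X → ℝ, Measurable h →
      (∫⁻ x, Φ (h (φ x)) ∂μ) ≤ c * ∫⁻ x, Φ (h x) ∂μ := by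
    intro h hm
    calc (∫⁻ x, Φ (h (φ x)) ∂μ) = ∫⁻ y, Φ (h y) ∂(μ.map φ) :=
          (lintegral_map (hΦm.comp hm) hφ).symm
      _ ≤ ∫⁻ y, Φ (h y) ∂(c • μ) := lintegral_mono' hmap le_rfl
      _ = c * ∫⁻ y, Φ (h y) ∂μ := lintegral_smul_measure c _
  -- nonemptiness of the Luxemburg sets
  have hne : ∀ f : X → ℝ, Measurable f → ∀ k₀ : ℝ, 0 < k₀ →
      (∫⁻ x, Φ (k₀ * f x) ∂μ) < ⊤ →
      ∃ k : ℝ, 0 < k ∧ (∫⁻ x, Φ (f x / k) ∂μ) ≤ 1 := by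
    intro f hfm k₀ hk₀ hI
    obtain ⟨s, hs0, hs1, hsI⟩ := small_scalar _ hI.ne
    refine ⟨(s * k₀)⁻¹, by positivity, ?_⟩
    have hpt : ∀ x, Φ (f x / (s * k₀)⁻¹) ≤ ENNReal.ofReal s * Φ (k₀ * f x) := by
      intro x
      have hrw : f x / (s * k₀)⁻¹ = s * (k₀ * f x) := by
        field_simp
      rw [hrw]
      exact young_scale hΦ s _ hs0.le hs1
    calc (∫⁻ x, Φ (f x / (s * k₀)⁻¹) ∂μ)
        ≤ ∫⁻ x, ENNReal.ofReal s * Φ (k₀ * f x) ∂μ := lintegral_mono hpt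
      _ = ENNReal.ofReal s * ∫⁻ x, Φ (k₀ * f x) ∂μ :=
          lintegral_const_mul _ (hΦm.comp (hfm.const_mul k₀))
      _ ≤ 1 := hsI
  by_cases hA : ∃ a : ℝ, 0 < a ∧ Φ a < ⊤
  · -- regular case
    obtain ⟨a, ha, haΦ⟩ := hA
    have hB : Φ a * (c * ENNReal.ofReal c') ≠ ⊤ :=
      ENNReal.mul_ne_top haΦ.ne (ENNReal.mul_ne_top hc'.ne ENNReal.ofReal_ne_top)
    obtain ⟨t, ht0, ht1, htB⟩ := small_scalar _ hB
    set u : ℝ := t * a with hu_def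
    have hu : 0 < u := mul_pos ht0 ha
    have hu1 : Φ u * (c * ENNReal.ofReal c') ≤ 1 := by
      calc Φ u * (c * ENNReal.ofReal c')
          ≤ (ENNReal.ofReal t * Φ a) * (c * ENNReal.ofReal c') := by
            gcongr
            exact young_scale hΦ t a ht0.le ht1
        _ = ENNReal.ofReal t * (Φ a * (c * ENNReal.ofReal c')) := by ring
        _ ≤ 1 := htB
    refine ⟨u⁻¹, inv_pos.2 hu, fun f hf => ?_⟩
    obtain ⟨hfm, k₀, hk₀, hI⟩ := hf
    have hfφm : Measurable (f ∘ φ) := hfm.comp hφ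
    have hmem : MemOrlicz Φ μ (f ∘ φ) := by
      refine ⟨hfφm, k₀, hk₀, ?_⟩
      calc (∫⁻ x, Φ (k₀ * (f ∘ φ) x) ∂μ)
          ≤ c * ∫⁻ x, Φ (k₀ * f x) ∂μ := hkey (fun y => k₀ * f y) (hfm.const_mul k₀)
        _ < ⊤ := ENNReal.mul_lt_top hc' hI
    refine ⟨hmem, ?_⟩
    set S : Set ℝ := {k : ℝ | 0 < k ∧ (∫⁻ x, Φ (f x / k) ∂μ) ≤ 1} with hS_def
    set S' : Set ℝ := {k : ℝ | 0 < k ∧ (∫⁻ x, Φ ((f ∘ φ) x / k) ∂μ) ≤ 1} with hS'_def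
    have hSne : S.Nonempty := hne f hfm k₀ hk₀ hI
    have hbdd : BddBelow S' := ⟨0, fun x hx => hx.1.le⟩
    have hstep : ∀ k ∈ S, u⁻¹ * k ∈ S' := by
      rintro k ⟨hk, hint⟩
      refine ⟨by positivity, ?_⟩
      have hpt : ∀ y : X, Φ (f y / (u⁻¹ * k)) ≤
          (ENNReal.ofReal c' * Φ u) * Φ (f y / k) := by
        intro y
        have hrw : f y / (u⁻¹ * k) = |f y / k| * u ∨
            f y / (u⁻¹ * k) = -(|f y / k| * u) := by
          rcases abs_cases (f y / k) with ⟨h1, _⟩ | ⟨h1, _⟩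
          · left; rw [h1]; field_simp
          · right; rw [h1]; field_simp
        have hΔ' := hΔ |f y / k| u (abs_nonneg _) hu.le
        rw [young_abs hΦ] at hΔ'
        have hval : Φ (f y / (u⁻¹ * k)) = Φ (|f y / k| * u) := by
          rcases hrw with h | h
          · rw [h]
          · rw [h, hΦ.even]
        rw [hval]
        calc Φ (|f y / k| * u) ≤ ENNReal.ofReal c' * Φ (f y / k) * Φ u := hΔ'
          _ = (ENNReal.ofReal c' * Φ u) * Φ (f y / k) := by ring
      calc (∫⁻ x, Φ ((f ∘ φ) x / (u⁻¹ * k)) ∂μ)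
          ≤ ∫⁻ x, (ENNReal.ofReal c' * Φ u) * Φ ((f ∘ φ) x / k) ∂μ :=
            lintegral_mono fun x => hpt (φ x)
        _ = (ENNReal.ofReal c' * Φ u) * ∫⁻ x, Φ (f (φ x) / k) ∂μ :=
            lintegral_const_mul _ (hΦm.comp (hfφm.div_const k))
        _ ≤ (ENNReal.ofReal c' * Φ u) * (c * ∫⁻ x, Φ (f x / k) ∂μ) := by
            gcongr
            exact hkey (fun y => f y / k) (hfm.div_const k)
        _ ≤ (ENNReal.ofReal c' * Φ u) * (c * 1) := by gcongr
        _ = Φ u * (c * ENNReal.ofReal c') := by ring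
        _ ≤ 1 := hu1
    show sInf S' ≤ u⁻¹ * sInf S
    have hM : (0 : ℝ) < u⁻¹ := inv_pos.2 hu
    have h1 : sInf S' / u⁻¹ ≤ sInf S := by
      refine le_csInf hSne fun k hk => ?_
      rw [div_le_iff₀ hM]
      exact (csInf_le hbdd (hstep k hk)).trans_eq (mul_comm u⁻¹ k)
    rw [div_le_iff₀ hM] at h1
    linarith
  · -- degenerate case : Φ = ⊤ on (0,∞)
    push_neg at hA
    have hTop : ∀ a : ℝ, a ≠ 0 → Φ a = ⊤ := by
      intro a ha
      rcases ha.lt_or_gt with h | h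
      · rw [← hΦ.even]
        exact top_le_iff.1 (hA (-a) (neg_pos.2 h))
      · exact top_le_iff.1 (hA a h)
    have hzero : ∀ f : X → ℝ, Measurable f → ∀ k₀ : ℝ, 0 < k₀ →
        (∫⁻ x, Φ (k₀ * f x) ∂μ) < ⊤ → μ {x | f x ≠ 0} = 0 := by
      intro f hfm k₀ hk₀ hI
      by_contra hN
      have hNs : MeasurableSet {x | f x ≠ 0} := (hfm (measurableSet_singleton 0)).compl
      have : (∫⁻ x, Φ (k₀ * f x) ∂μ) = ⊤ := by
        refine top_le_iff.1 ?_
        calc (⊤ : ℝ≥0∞) = ⊤ * μ {x | f x ≠ 0} := (ENNReal.top_mul hN).symm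
          _ = ∫⁻ _ in {x | f x ≠ 0}, ⊤ ∂μ := by rw [setLIntegral_const, mul_comm]
          _ ≤ ∫⁻ x in {x | f x ≠ 0}, Φ (k₀ * f x) ∂μ := by
              refine setLIntegral_mono_ae (hΦm.comp (hfm.const_mul k₀)).aemeasurable ?_
              filter_upwards with x hx
              rw [hTop _ (mul_ne_zero hk₀.ne' hx)]
          _ ≤ ∫⁻ x, Φ (k₀ * f x) ∂μ := setLIntegral_le_lintegral _ _
      exact hI.ne this
    refine ⟨1, one_pos, fun f hf => ?_⟩
    obtain ⟨hfm, k₀, hk₀, hI⟩ := hf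
    have hfφm : Measurable (f ∘ φ) := hfm.comp hφ
    have hNf : μ {x | f x ≠ 0} = 0 := hzero f hfm k₀ hk₀ hI
    have hNs : MeasurableSet {x : X | f x ≠ 0} := (hfm (measurableSet_singleton 0)).compl
    have hNfφ : μ {x | (f ∘ φ) x ≠ 0} = 0 := by
      have : {x | (f ∘ φ) x ≠ 0} = φ ⁻¹' {x | f x ≠ 0} := rfl
      rw [this]
      refine le_antisymm ?_ zero_le
      calc μ (φ ⁻¹' {x | f x ≠ 0}) ≤ c * μ {x | f x ≠ 0} := hbound _ hNs
        _ = 0 := by rw [hNf, mul_zero]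
    have hfae : f =ᵐ[μ] 0 := by
      rw [Filter.EventuallyEq, ae_iff]
      simpa using hNf
    have hfφae : (f ∘ φ) =ᵐ[μ] 0 := by
      rw [Filter.EventuallyEq, ae_iff]
      simpa using hNfφ
    have hint : ∀ (g : X → ℝ), g =ᵐ[μ] 0 → ∀ k : ℝ, (∫⁻ x, Φ (g x / k) ∂μ) = 0 := by
      intro g hg k
      have : (fun x => Φ (g x / k)) =ᵐ[μ] 0 := by
        filter_upwards [hg] with x hx
        simp [hx, hΦ.map_zero]
      rw [lintegral_congr_ae this]
      simp
    have hintk : ∀ (g : X → ℝ), g =ᵐ[μ] 0 → ∀ k : ℝ, (∫⁻ x, Φ (k * g x) ∂μ) = 0 := by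
      intro g hg k
      have : (fun x => Φ (k * g x)) =ᵐ[μ] 0 := by
        filter_upwards [hg] with x hx
        simp [hx, hΦ.map_zero]
      rw [lintegral_congr_ae this]
      simp
    have hmem : MemOrlicz Φ μ (f ∘ φ) :=
      ⟨hfφm, 1, one_pos, by rw [hintk _ hfφae 1]; exact ENNReal.zero_lt_top⟩
    refine ⟨hmem, ?_⟩
    have hLg : ∀ (g : X → ℝ), g =ᵐ[μ] 0 → LuxNorm Φ μ g = 0 := by
      intro g hg
      have hset : {k : ℝ | 0 < k ∧ (∫⁻ x, Φ (g x / k) ∂μ) ≤ 1} = Ioi 0 := by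
        ext k
        simp [hint g hg k]
      rw [LuxNorm, hset, csInf_Ioi]
    rw [hLg f hfae, hLg (f ∘ φ) hfφae, mul_zero]
end
end

section
/- Let (X,𝓕,μ,φ,C_φ) be a composition dynamical system on L^Φ(μ) with φ invertible. If C_φ is expansive, then for every A ∈ 𝓕 with 0 < μ(A) < ∞ we have inf_{n∈ℤ} Φ^{-1}(1/μ(φ^{-n}(A))) = 0. -/
open MeasureTheory ENNReal Filter Set Topology

noncomputable section

/-- Integer iterates of an invertible map `φ` with inverse `ψ`:
`zIter φ ψ n = φ^n` for `n ≥ 0` and `= ψ^{|n|}` for `n < 0`. -/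
def zIter {X : Type*} (φ ψ : X → X) (n : ℤ) : X → X :=
  if 0 ≤ n then φ^[n.toNat] else ψ^[(-n).toNat]

lemma iter_measure_le {X : Type*} [MeasurableSpace X] (μ : Measure X) {g : X → X}
    (hg : Measurable g) {c : ℝ≥0∞}
    (hb : ∀ B : Set X, MeasurableSet B → μ (g ⁻¹' B) ≤ c * μ B) :
    ∀ (m : ℕ) (B : Set X), MeasurableSet B → μ (g^[m] ⁻¹' B) ≤ c ^ m * μ B := by
  intro m
  induction m with
  | zero => intro B hB; simp
  | succ m ih =>
    intro B hB
    rw [Function.iterate_succ, Set.preimage_comp]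
    calc μ (g ⁻¹' (g^[m] ⁻¹' B)) ≤ c * μ (g^[m] ⁻¹' B) := hb _ ((hg.iterate m) hB)
      _ ≤ c * (c ^ m * μ B) := by gcongr; exact ih B hB
      _ = c ^ (m + 1) * μ B := by ring


/-- if the invertible composition operator `C_φ` on `L^Φ(μ)` is expansive
(i.e. `sup_{n ∈ ℤ} N_Φ(C_φ^n f) = ∞` for every nonzero `f ∈ L^Φ(μ)`), then for every
`A` with `0 < μ(A) < ∞` one has `inf_{n ∈ ℤ} Φ⁻¹(1/μ(φ^{-n}(A))) = 0`. -/
theorem expansive_implies_inf_eq_zero {X : Type*} [MeasurableSpace X] (μ : Measure X)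
    [SigmaFinite μ] (Φ : ℝ → ℝ≥0∞) (hΦ : IsYoungFunction Φ)
    (φ ψ : X → X) (hφ : Measurable φ) (hψ : Measurable ψ)
    (hinv₁ : Function.LeftInverse ψ φ) (hinv₂ : Function.RightInverse ψ φ)
    (c c' : ℝ≥0∞) (hc : 0 < c) (hcT : c < ⊤) (hc' : 0 < c') (hc'T : c' < ⊤)
    (hbound : ∀ A : Set X, MeasurableSet A → μ (φ ⁻¹' A) ≤ c * μ A)
    (hbound' : ∀ A : Set X, MeasurableSet A → μ (ψ ⁻¹' A) ≤ c' * μ A)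
    (hexp : ∀ f : X → ℝ, MemOrlicz Φ μ f → ¬ f =ᵐ[μ] 0 →
      ∀ M : ℝ, ∃ n : ℤ, M ≤ LuxNorm Φ μ (f ∘ zIter φ ψ n)) :
    ∀ A : Set X, MeasurableSet A → 0 < μ A → μ A < ⊤ →
      (⨅ n : ℤ, PhiInv Φ (1 / μ (zIter φ ψ n ⁻¹' A))) = 0 := by
  intro A hA hA0 hAT
  -- measurability of iterates
  have hφm : ∀ m : ℕ, Measurable (φ^[m]) := fun m => hφ.iterate m
  have hψm : ∀ m : ℕ, Measurable (ψ^[m]) := fun m => hψ.iterate m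
  have hmeasz : ∀ n : ℤ, Measurable (zIter φ ψ n) := by
    intro n; unfold zIter; split_ifs
    exacts [hφm _, hψm _]
  have hFmeas : ∀ n : ℤ, MeasurableSet (zIter φ ψ n ⁻¹' A) := fun n => hmeasz n hA
  -- identities for iterates of inverses
  have hidφ : ∀ m : ℕ, ψ^[m] ⁻¹' (φ^[m] ⁻¹' A) = A := by
    intro m; ext x
    simp [Set.mem_preimage, (hinv₂.iterate m) x]
  have hidψ : ∀ m : ℕ, φ^[m] ⁻¹' (ψ^[m] ⁻¹' A) = A := by
    intro m; ext x
    simp [Set.mem_preimage, (hinv₁.iterate m) x]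
  -- positivity and finiteness of the measures
  have hFpos : ∀ n : ℤ, 0 < μ (zIter φ ψ n ⁻¹' A) := by
    intro n
    rw [pos_iff_ne_zero]
    intro h0
    unfold zIter at h0
    split_ifs at h0 with h
    · have h1 : μ A ≤ c' ^ (n.toNat) * μ (φ^[n.toNat] ⁻¹' A) := by
        conv_lhs => rw [← hidφ n.toNat]
        exact iter_measure_le μ hψ hbound' _ _ (hφm _ hA)
      rw [h0, mul_zero] at h1
      exact hA0.ne' (le_antisymm h1 zero_le)
    · have h1 : μ A ≤ c ^ ((-n).toNat) * μ (ψ^[(-n).toNat] ⁻¹' A) := by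
        conv_lhs => rw [← hidψ (-n).toNat]
        exact iter_measure_le μ hφ hbound _ _ (hψm _ hA)
      rw [h0, mul_zero] at h1
      exact hA0.ne' (le_antisymm h1 zero_le)
  have hFfin : ∀ n : ℤ, μ (zIter φ ψ n ⁻¹' A) < ⊤ := by
    intro n
    unfold zIter
    split_ifs with h
    · exact lt_of_le_of_lt (iter_measure_le μ hφ hbound _ _ hA)
        (ENNReal.mul_lt_top (ENNReal.pow_lt_top hcT) hAT)
    · exact lt_of_le_of_lt (iter_measure_le μ hψ hbound' _ _ hA)
        (ENNReal.mul_lt_top (ENNReal.pow_lt_top hc'T) hAT)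
  -- PhiInv is nonnegative
  have hPnn : ∀ y : ℝ≥0∞, 0 ≤ PhiInv Φ y := by
    intro y
    exact Real.sSup_nonneg (fun x hx => hx.1)
  have hbdd : BddBelow (Set.range fun n : ℤ => PhiInv Φ (1 / μ (zIter φ ψ n ⁻¹' A))) := by
    refine ⟨0, ?_⟩
    rintro y ⟨m, rfl⟩
    exact hPnn _
  refine le_antisymm ?_ (le_ciInf fun n => hPnn _)
  have key : ∀ ε : ℝ, 0 < ε → (⨅ n : ℤ, PhiInv Φ (1 / μ (zIter φ ψ n ⁻¹' A))) ≤ ε := by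
    intro ε hε
    by_cases hdeg : ∃ k : ℝ, 0 < k ∧ Φ k < ⊤
    · obtain ⟨k, hk, hkT⟩ := hdeg
      set f : X → ℝ := A.indicator (fun _ => 1) with hfdef
      have hfO : MemOrlicz Φ μ f := by
        refine ⟨measurable_const.indicator hA, k, hk, ?_⟩
        have hfun : (fun x => Φ (k * f x)) = fun x => A.indicator (fun _ => Φ k) x := by
          funext x
          by_cases hx : x ∈ A <;>
            simp [hfdef, Set.indicator_of_mem, Set.indicator_of_notMem, hx, hΦ.map_zero]
        rw [hfun]
        rw [lintegral_indicator hA, setLIntegral_const]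
        exact ENNReal.mul_lt_top hkT hAT
      have hfne : ¬ f =ᵐ[μ] 0 := by
        intro h
        have h2 : μ {x | ¬ f x = 0} = 0 := ae_iff.mp h
        have h3 : {x | ¬ f x = 0} = A := by
          ext x
          by_cases hx : x ∈ A <;>
            simp [hfdef, Set.indicator_of_mem, Set.indicator_of_notMem, hx]
        rw [h3] at h2
        exact hA0.ne' h2
      obtain ⟨n, hn⟩ := hexp f hfO hfne (1 / ε)
      refine (ciInf_le hbdd n).trans ?_
      apply Real.sSup_le _ hε.le
      rintro x ⟨hx0, hxΦ⟩
      rcases eq_or_lt_of_le hx0 with rfl | hxpos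
      · exact hε.le
      · -- x > 0 and Φ x ≤ 1 / μ F
        have hmul : Φ x * μ (zIter φ ψ n ⁻¹' A) ≤ 1 :=
          (ENNReal.le_div_iff_mul_le (Or.inl (hFpos n).ne') (Or.inr one_ne_top)).mp hxΦ
        have hmem : (1 / x) ∈ {k : ℝ | 0 < k ∧ (∫⁻ y, Φ ((f ∘ zIter φ ψ n) y / k) ∂μ) ≤ 1} := by
          refine ⟨one_div_pos.mpr hxpos, ?_⟩
          have heq : (fun y => Φ ((f ∘ zIter φ ψ n) y / (1 / x)))
              = fun y => (zIter φ ψ n ⁻¹' A).indicator (fun _ => Φ x) y := by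
            funext y
            by_cases hy : y ∈ zIter φ ψ n ⁻¹' A
            · have hy' : zIter φ ψ n y ∈ A := hy
              simp [hfdef, Function.comp, Set.indicator_of_mem, hy, hy',
                one_div_one_div]
            · have hy' : zIter φ ψ n y ∉ A := hy
              simp [hfdef, Function.comp, Set.indicator_of_notMem, hy, hy',
                hΦ.map_zero]
          rw [heq]
          rw [lintegral_indicator (hFmeas n), setLIntegral_const]
          exact hmul
        have hLux : LuxNorm Φ μ (f ∘ zIter φ ψ n) ≤ 1 / x :=
          csInf_le ⟨0, fun k hk => hk.1.le⟩ hmem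
        have hchain : 1 / ε ≤ 1 / x := hn.trans hLux
        exact le_of_one_div_le_one_div hε hchain
    · -- degenerate case : Φ k = ⊤ for all k > 0
      push_neg at hdeg
      refine (ciInf_le hbdd 0).trans ?_
      apply Real.sSup_le _ hε.le
      rintro x ⟨hx0, hxΦ⟩
      rcases eq_or_lt_of_le hx0 with rfl | hxpos
      · exact hε.le
      · exfalso
        have h1 : (1 : ℝ≥0∞) / μ (zIter φ ψ 0 ⁻¹' A) < ⊤ :=
          ENNReal.div_lt_top one_ne_top (hFpos 0).ne'
        exact absurd (lt_of_le_of_lt hxΦ h1) (not_lt.mpr (hdeg x hxpos))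
  exact _root_.le_of_forall_pos_le_add (fun ε hε => by simpa using key ε hε)
end
end

section
/- Let (X,𝓕,μ,φ,C_φ) be a composition dynamical system on L^Φ(μ) with φ invertible. If for every A ∈ 𝓕 with 0 < μ(A) < ∞ we have inf_{n∈ℤ} Φ^{-1}(1/μ(φ^{-n}(A))) = 0, then C_φ is expansive, i.e., sup_{n∈ℤ} N_Φ(C_φ^n f) = ∞ for every nonzero f ∈ L^Φ(μ). -/
open MeasureTheory ENNReal Filter Set Topology

noncomputable section

namespace ExpansiveAux

variable {Φ : ℝ → ℝ≥0∞}

lemma phi_mono (hΦ : IsYoungFunction Φ) {a b : ℝ} (ha : 0 ≤ a) (hab : a ≤ b) :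
    Φ a ≤ Φ b := by
  rcases eq_or_lt_of_le (ha.trans hab) with hb | hb
  · have h0 : a = 0 := le_antisymm (hab.trans hb.symm.le) ha
    rw [h0, ← hb]
  · set t : ℝ := (a + b) / (2 * b) with ht
    have ht0 : 0 ≤ t := by positivity
    have ht1 : t ≤ 1 := by rw [div_le_one (by positivity)]; linarith
    have hxy : t * b + (1 - t) * (-b) = a := by field_simp [ht]; linear_combination (a + b) * mul_inv_cancel₀ hb.ne'
    have hc := hΦ.convexity b (-b) t ht0 ht1
    rw [hxy, hΦ.even] at hc
    calc Φ a ≤ ENNReal.ofReal t * Φ b + ENNReal.ofReal (1-t) * Φ b := hc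
    _ = (ENNReal.ofReal t + ENNReal.ofReal (1-t)) * Φ b := by ring
    _ = Φ b := by rw [← ENNReal.ofReal_add ht0 (by linarith)]; norm_num

lemma phi_abs (hΦ : IsYoungFunction Φ) (x : ℝ) : Φ x = Φ |x| := by
  rcases abs_choice x with h | h
  · rw [h]
  · rw [h, hΦ.even]

lemma phi_measurable (hΦ : IsYoungFunction Φ) : Measurable Φ := by
  have hmono : Monotone (fun t => Φ (max t 0)) := fun s t hst =>
    phi_mono hΦ (le_max_right _ _) (max_le_max hst le_rfl)
  have heq : Φ = (fun t => Φ (max t 0)) ∘ (fun x : ℝ => |x|) := by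
    funext x
    simp only [Function.comp_apply, max_eq_left (abs_nonneg x)]
    exact phi_abs hΦ x
  rw [heq]; exact hmono.measurable.comp measurable_abs

lemma phi_bddAbove (hΦ : IsYoungFunction Φ) {y : ℝ≥0∞} (hy : y ≠ ⊤) :
    BddAbove {x : ℝ | 0 ≤ x ∧ Φ x ≤ y} := by
  have hev := hΦ.tendsto_top.eventually (eventually_gt_nhds (lt_top_iff_ne_top.2 hy))
  obtain ⟨x0, hx0⟩ := Filter.eventually_atTop.1 hev
  exact ⟨x0, fun x hx => le_of_not_gt fun h => absurd (hx0 x h.le) (not_lt.2 hx.2)⟩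

lemma le_phiInv (hΦ : IsYoungFunction Φ) {y : ℝ≥0∞} {x : ℝ} (hy : y ≠ ⊤)
    (hx : 0 ≤ x) (hxy : Φ x ≤ y) : x ≤ PhiInv Φ y :=
  le_csSup (phi_bddAbove hΦ hy) ⟨hx, hxy⟩

lemma phi_smul (hΦ : IsYoungFunction Φ) {t : ℝ} (a : ℝ) (ht0 : 0 ≤ t) (ht1 : t ≤ 1) :
    Φ (t * a) ≤ ENNReal.ofReal t * Φ a := by
  have hc := hΦ.convexity a 0 t ht0 ht1
  simpa [hΦ.map_zero] using hc

lemma phiInv_pos (hΦ : IsYoungFunction Φ) {r : ℝ} (hr : 0 < r) (hrT : Φ r ≠ ⊤)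
    {y : ℝ≥0∞} (hy0 : y ≠ 0) (hyT : y ≠ ⊤) : 0 < PhiInv Φ y := by
  by_cases hΦr : Φ r = 0
  · exact lt_of_lt_of_le hr (le_phiInv hΦ hyT hr.le (hΦr ▸ (zero_le : (0:ℝ≥0∞) ≤ y)))
  · set t : ℝ := min 1 (y.toReal / (Φ r).toReal) with htdef
    have hyR : 0 < y.toReal := ENNReal.toReal_pos hy0 hyT
    have hrR : 0 < (Φ r).toReal := ENNReal.toReal_pos hΦr hrT
    have ht0 : 0 < t := lt_min one_pos (by positivity)
    have ht1 : t ≤ 1 := min_le_left _ _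
    have hle : ENNReal.ofReal t * Φ r ≤ y := by
      calc ENNReal.ofReal t * Φ r
          ≤ ENNReal.ofReal (y.toReal / (Φ r).toReal) * ENNReal.ofReal (Φ r).toReal := by
            gcongr
            · exact min_le_right _ _
            · rw [ENNReal.ofReal_toReal hrT]
        _ = ENNReal.ofReal (y.toReal / (Φ r).toReal * (Φ r).toReal) := by
            rw [ENNReal.ofReal_mul (by positivity)]
        _ = y := by rw [div_mul_cancel₀ _ hrR.ne', ENNReal.ofReal_toReal hyT]
    have hmem : Φ (t * r) ≤ y := le_trans (phi_smul hΦ r ht0.le ht1) hle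
    exact lt_of_lt_of_le (by positivity) (le_phiInv hΦ hyT (by positivity) hmem)

lemma lint_comp {X : Type*} [MeasurableSpace X] (μ : Measure X) (T : X → X)
    (hT : Measurable T) (C : ℝ≥0∞)
    (hC : ∀ s : Set X, MeasurableSet s → μ (T ⁻¹' s) ≤ C * μ s)
    (H : X → ℝ≥0∞) (hH : Measurable H) :
    ∫⁻ x, H (T x) ∂μ ≤ C * ∫⁻ x, H x ∂μ := by
  rw [← lintegral_map hH hT, ← smul_eq_mul, ← lintegral_smul_measure]
  refine lintegral_mono' (Measure.le_iff.2 fun s hs => ?_) le_rfl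
  rw [Measure.map_apply hT hs, Measure.smul_apply, smul_eq_mul]
  exact hC s hs

lemma iter_bound {X : Type*} [MeasurableSpace X] (μ : Measure X) {φ : X → X}
    (hφ : Measurable φ) (c : ℝ≥0∞)
    (hb : ∀ A : Set X, MeasurableSet A → μ (φ ⁻¹' A) ≤ c * μ A) :
    ∀ (m : ℕ) (s : Set X), MeasurableSet s → μ (φ^[m] ⁻¹' s) ≤ c ^ m * μ s := by
  intro m
  induction m with
  | zero => simp
  | succ m ih =>
    intro s hs
    rw [Function.iterate_succ', Set.preimage_comp]
    calc μ (φ^[m] ⁻¹' (φ ⁻¹' s)) ≤ c ^ m * μ (φ ⁻¹' s) := ih _ (hφ hs)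
      _ ≤ c ^ m * (c * μ s) := mul_le_mul_right (hb s hs) _
      _ = c ^ (m + 1) * μ s := by ring

lemma zIter_measurable {X : Type*} [MeasurableSpace X] {φ ψ : X → X}
    (hφ : Measurable φ) (hψ : Measurable ψ) (n : ℤ) : Measurable (zIter φ ψ n) := by
  unfold zIter; split
  · exact hφ.iterate _
  · exact hψ.iterate _

lemma zIter_inv {X : Type*} {φ ψ : X → X} (hinv₁ : Function.LeftInverse ψ φ)
    (hinv₂ : Function.RightInverse ψ φ) (n : ℤ) (x : X) :
    zIter φ ψ n (zIter φ ψ (-n) x) = x := by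
  unfold zIter
  rcases lt_trichotomy n 0 with h | h | h
  · rw [if_neg (not_le.2 h), if_pos (by omega : (0:ℤ) ≤ -n)]
    exact (hinv₁.iterate _) x
  · subst h; simp
  · rw [if_pos h.le, if_neg (by omega), neg_neg]
    exact (hinv₂.iterate _) x

end ExpansiveAux

open ExpansiveAux in
/-- if `inf_{n ∈ ℤ} Φ⁻¹(1/μ(φ^{-n}(A))) = 0` for every `A` with
`0 < μ(A) < ∞`, then the invertible composition operator `C_φ` is expansive, i.e.
`sup_{n ∈ ℤ} N_Φ(C_φ^n f) = ∞` for every nonzero `f ∈ L^Φ(μ)`. -/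
theorem inf_eq_zero_implies_expansive {X : Type*} [MeasurableSpace X] (μ : Measure X)
    [SigmaFinite μ] (Φ : ℝ → ℝ≥0∞) (hΦ : IsYoungFunction Φ)
    (φ ψ : X → X) (hφ : Measurable φ) (hψ : Measurable ψ)
    (hinv₁ : Function.LeftInverse ψ φ) (hinv₂ : Function.RightInverse ψ φ)
    (c c' : ℝ≥0∞) (hc : 0 < c) (hcT : c < ⊤) (hc' : 0 < c') (hc'T : c' < ⊤)
    (hbound : ∀ A : Set X, MeasurableSet A → μ (φ ⁻¹' A) ≤ c * μ A)
    (hbound' : ∀ A : Set X, MeasurableSet A → μ (ψ ⁻¹' A) ≤ c' * μ A)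
    (hinf : ∀ A : Set X, MeasurableSet A → 0 < μ A → μ A < ⊤ →
      (⨅ n : ℤ, PhiInv Φ (1 / μ (zIter φ ψ n ⁻¹' A))) = 0) :
    ∀ f : X → ℝ, MemOrlicz Φ μ f → ¬ f =ᵐ[μ] 0 →
      ∀ M : ℝ, ∃ n : ℤ, M ≤ LuxNorm Φ μ (f ∘ zIter φ ψ n) := by
  intro f hf hfne M
  obtain ⟨hfm, k0, hk0, hfin⟩ := hf
  have hΦm := phi_measurable hΦ
  -- f is nonzero on a set of positive measure
  have h1 : μ {x | f x ≠ 0} ≠ 0 := by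
    intro h
    apply hfne
    have : ∀ᵐ x ∂μ, f x = 0 := by
      rw [ae_iff]; simpa using h
    exact this
  -- find δ > 0 with μ {δ < |f|} ≠ 0
  have h2 : ∃ m : ℕ, μ {x | 1/((m:ℝ)+1) < |f x|} ≠ 0 := by
    by_contra hcon
    push_neg at hcon
    apply h1
    have hsub : {x | f x ≠ 0} ⊆ ⋃ m : ℕ, {x | 1/((m:ℝ)+1) < |f x|} := by
      intro x hx
      obtain ⟨m, hm⟩ := exists_nat_one_div_lt (abs_pos.2 hx)
      exact Set.mem_iUnion.2 ⟨m, hm⟩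
    exact measure_mono_null hsub (measure_iUnion_null hcon)
  obtain ⟨m, hm⟩ := h2
  set δ : ℝ := 1/((m:ℝ)+1) with hδdef
  have hδ : 0 < δ := by positivity
  -- intersect with a spanning set of finite measure
  have h3 : ∃ j : ℕ, μ ({x | δ < |f x|} ∩ spanningSets μ j) ≠ 0 := by
    by_contra hcon
    push_neg at hcon
    apply hm
    have hUeq : {x | δ < |f x|} = ⋃ j, {x | δ < |f x|} ∩ spanningSets μ j := by
      rw [← Set.inter_iUnion, iUnion_spanningSets, Set.inter_univ]
    rw [hUeq]
    exact measure_iUnion_null hcon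
  obtain ⟨j, hj⟩ := h3
  set A := {x | δ < |f x|} ∩ spanningSets μ j with hAdef
  have hAmeas : MeasurableSet A :=
    (measurableSet_lt measurable_const hfm.abs).inter (measurableSet_spanningSets μ j)
  have hA0 : 0 < μ A := pos_iff_ne_zero.2 hj
  have hAT : μ A < ⊤ :=
    lt_of_le_of_lt (measure_mono Set.inter_subset_right) (measure_spanningSets_lt_top μ j)
  have hinfA := hinf A hAmeas hA0 hAT
  -- find r > 0 with Φ r < ⊤
  have hmeasΦf : Measurable fun x => Φ (k0 * f x) := hΦm.comp (hfm.const_mul k0)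
  have hae : ∀ᵐ x ∂μ, Φ (k0 * f x) < ⊤ := ae_lt_top hmeasΦf hfin.ne
  have hbadnull : μ {x | ¬ Φ (k0 * f x) < ⊤} = 0 := ae_iff.1 hae
  have hgood : μ (A \ {x | ¬ Φ (k0 * f x) < ⊤}) ≠ 0 := by
    rw [measure_diff_null hbadnull]; exact hA0.ne'
  obtain ⟨x0, hx0⟩ := nonempty_of_measure_ne_zero hgood
  have hx0A : x0 ∈ A := hx0.1
  have hx0g : Φ (k0 * f x0) < ⊤ := not_not.1 hx0.2
  set r : ℝ := k0 * |f x0| with hrdef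
  have hfx0 : 0 < |f x0| := lt_trans hδ hx0A.1
  have hrpos : 0 < r := mul_pos hk0 hfx0
  have hrT : Φ r ≠ ⊤ := by
    rw [show r = |k0 * f x0| by rw [abs_mul, abs_of_pos hk0], ← phi_abs hΦ]
    exact hx0g.ne
  -- trivial case M ≤ 0
  rcases le_or_gt M 0 with hM | hM
  · refine ⟨0, le_trans hM ?_⟩
    exact Real.sInf_nonneg (fun k hk => hk.1.le)
  -- main case
  have hδM : 0 < δ / M := div_pos hδ hM
  obtain ⟨n, hn⟩ := exists_lt_of_ciInf_lt (hinfA ▸ hδM)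
  refine ⟨n, ?_⟩
  set T := zIter φ ψ n with hTdef
  have hTm : Measurable T := zIter_measurable hφ hψ n
  set B := T ⁻¹' A with hBdef
  have hBmeas : MeasurableSet B := hTm hAmeas
  -- measure comparison bounds for zIter
  have hzb : ∀ k : ℤ, ∃ C : ℝ≥0∞, C ≠ ⊤ ∧
      ∀ s : Set X, MeasurableSet s → μ (zIter φ ψ k ⁻¹' s) ≤ C * μ s := by
    intro k
    unfold zIter
    split
    · exact ⟨c ^ k.toNat, ENNReal.pow_ne_top hcT.ne, iter_bound μ hφ c hbound k.toNat⟩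
    · exact ⟨c' ^ (-k).toNat, ENNReal.pow_ne_top hc'T.ne, iter_bound μ hψ c' hbound' (-k).toNat⟩
  obtain ⟨C, hCT, hCb⟩ := hzb n
  obtain ⟨C', hC'T2, hC'b⟩ := hzb (-n)
  have hBfin : μ B < ⊤ :=
    lt_of_le_of_lt (hCb A hAmeas) (ENNReal.mul_lt_top hCT.lt_top hAT)
  have hB0 : μ B ≠ 0 := by
    intro h0
    have hAeq : A = zIter φ ψ (-n) ⁻¹' B := by
      ext x
      simp only [hBdef, Set.mem_preimage, hTdef, zIter_inv hinv₁ hinv₂ n x]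
    have hle := hC'b B hBmeas
    rw [← hAeq, h0, mul_zero] at hle
    exact hA0.ne' (le_antisymm hle zero_le)
  set y := 1 / μ B with hydef
  have hy0 : y ≠ 0 := by
    simp [hydef, ENNReal.div_eq_zero_iff, hBfin.ne]
  have hyT : y ≠ ⊤ := by
    simp [hydef, ENNReal.div_eq_top, hB0]
  have hp_pos : 0 < PhiInv Φ y := phiInv_pos hΦ hrpos hrT hy0 hyT
  have hp_lt : PhiInv Φ y < δ / M := hn
  -- every admissible k is larger than M
  have hall : ∀ k ∈ {k : ℝ | 0 < k ∧ (∫⁻ x, Φ ((f ∘ T) x / k) ∂μ) ≤ 1}, M ≤ k := by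
    intro k hk
    obtain ⟨hkpos, hkint⟩ := hk
    have hptw : ∀ x, B.indicator (fun _ => Φ (δ / k)) x ≤ Φ ((f ∘ T) x / k) := by
      intro x
      by_cases hx : x ∈ B
      · rw [Set.indicator_of_mem hx]
        have hfx : δ < |f (T x)| := hx.1
        calc Φ (δ / k) ≤ Φ (|f (T x)| / k) :=
              phi_mono hΦ (by positivity) (by gcongr)
          _ = Φ ((f ∘ T) x / k) := by
              rw [phi_abs hΦ ((f ∘ T) x / k), Function.comp_apply, abs_div,
                abs_of_pos hkpos]
      · rw [Set.indicator_of_notMem hx]; exact zero_le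
    have hlow : Φ (δ / k) * μ B ≤ 1 := by
      calc Φ (δ / k) * μ B
          = ∫⁻ x, B.indicator (fun _ => Φ (δ / k)) x ∂μ :=
            (lintegral_indicator_const hBmeas _).symm
        _ ≤ ∫⁻ x, Φ ((f ∘ T) x / k) ∂μ := lintegral_mono hptw
        _ ≤ 1 := hkint
    have hΦδk : Φ (δ / k) ≤ y := by
      rw [hydef]
      exact (ENNReal.le_div_iff_mul_le (Or.inl hB0) (Or.inl hBfin.ne)).2 hlow
    have hdk : δ / k ≤ PhiInv Φ y := le_phiInv hΦ hyT (by positivity) hΦδk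
    have hlt : δ / k < δ / M := lt_of_le_of_lt hdk hp_lt
    have := (div_lt_div_iff₀ hkpos hM).1 hlt
    nlinarith
  -- the admissible set is nonempty
  have hcomp : ∫⁻ x, Φ (k0 * (f ∘ T) x) ∂μ ≤ C * ∫⁻ x, Φ (k0 * f x) ∂μ :=
    lint_comp μ T hTm C hCb _ hmeasΦf
  have hCI : C * ∫⁻ x, Φ (k0 * f x) ∂μ < ⊤ := ENNReal.mul_lt_top hCT.lt_top hfin
  set D := (C * ∫⁻ x, Φ (k0 * f x) ∂μ).toReal with hDdef
  have hD0 : 0 ≤ D := ENNReal.toReal_nonneg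
  set k1 : ℝ := (D + 1) / k0 with hk1def
  have hk1pos : 0 < k1 := by positivity
  have hk0k1 : k0 * k1 = D + 1 := by
    rw [hk1def]; field_simp
  have hk1mem : k1 ∈ {k : ℝ | 0 < k ∧ (∫⁻ x, Φ ((f ∘ T) x / k) ∂μ) ≤ 1} := by
    refine ⟨hk1pos, ?_⟩
    have hptw : ∀ x, Φ ((f ∘ T) x / k1) ≤ ENNReal.ofReal (1/(D+1)) * Φ (k0 * (f ∘ T) x) := by
      intro x
      have harg : (f ∘ T) x / k1 = (1/(D+1)) * (k0 * (f ∘ T) x) := by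
        rw [← hk0k1]; field_simp
      rw [harg]
      exact phi_smul hΦ _ (by positivity) (by rw [div_le_one (by positivity)]; linarith)
    calc ∫⁻ x, Φ ((f ∘ T) x / k1) ∂μ
        ≤ ∫⁻ x, ENNReal.ofReal (1/(D+1)) * Φ (k0 * (f ∘ T) x) ∂μ := lintegral_mono hptw
      _ = ENNReal.ofReal (1/(D+1)) * ∫⁻ x, Φ (k0 * (f ∘ T) x) ∂μ :=
          lintegral_const_mul' _ _ ENNReal.ofReal_ne_top
      _ ≤ ENNReal.ofReal (1/(D+1)) * (C * ∫⁻ x, Φ (k0 * f x) ∂μ) := mul_le_mul_right hcomp _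
      _ = ENNReal.ofReal (1/(D+1)) * ENNReal.ofReal D := by
          rw [hDdef, ENNReal.ofReal_toReal hCI.ne]
      _ = ENNReal.ofReal (1/(D+1) * D) := (ENNReal.ofReal_mul (by positivity)).symm
      _ ≤ 1 := by
          rw [← ENNReal.ofReal_one]
          apply ENNReal.ofReal_le_ofReal
          rw [div_mul_eq_mul_div, one_mul, div_le_one (by positivity)]
          linarith
  exact le_csInf ⟨k1, hk1mem⟩ hall
end
end

section
/- Let (X,𝓕,μ,φ) be a dissipative system of bounded distortion generated by W (with distortion constant K). Then there exists H > 0 such that for all F ∈ 𝓕_W with μ(F) > 0 and all s,t ∈ ℤ: (1/H)·N_Φ(C_φ^{t+s}χ_W)/N_Φ(C_φ^s χ_W) ≤ N_Φ(C_φ^{t+s}χ_F)/N_Φ(C_φ^s χ_F) ≤ H·N_Φ(C_φ^{t+s}χ_W)/N_Φ(C_φ^s χ_W). In fact H = K² works. -/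
open MeasureTheory ENNReal Filter Set Topology

noncomputable section

/-- Luxemburg norm of the characteristic function of a set. -/
def NInd {X : Type*} [MeasurableSpace X] (Φ : ℝ → ℝ≥0∞) (μ : Measure X)
    (A : Set X) : ℝ :=
  LuxNorm Φ μ (A.indicator fun _ => (1 : ℝ))

lemma lintegral_ind_formula {X : Type*} [MeasurableSpace X] (μ : Measure X)
    (Φ : ℝ → ℝ≥0∞) (hΦ0 : Φ 0 = 0) {A : Set X} (hA : MeasurableSet A) (k : ℝ) :
    (∫⁻ x, Φ (A.indicator (fun _ => (1 : ℝ)) x / k) ∂μ) = Φ (1 / k) * μ A := by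
  have he : (fun x => Φ (A.indicator (fun _ => (1 : ℝ)) x / k)) =
      A.indicator (fun _ => Φ (1 / k)) := by
    funext x
    by_cases hx : x ∈ A
    · simp [Set.indicator_of_mem hx]
    · simp [Set.indicator_of_notMem hx, hΦ0]
  rw [he, lintegral_indicator hA, setLIntegral_const]

lemma NInd_nonneg {X : Type*} [MeasurableSpace X] (Φ : ℝ → ℝ≥0∞) (μ : Measure X)
    (A : Set X) : 0 ≤ NInd Φ μ A :=
  Real.sInf_nonneg fun _ hx => hx.1.le

lemma NInd_pos {X : Type*} [MeasurableSpace X] {μ : Measure X}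
    {Φ : ℝ → ℝ≥0∞} (hΦ : IsYoungFunction Φ) {x0 : ℝ} (hx0 : 0 < x0) (hfin : Φ x0 ≠ ⊤)
    {A : Set X} (hA : MeasurableSet A) (h0 : 0 < μ A) (h1 : μ A < ⊤) :
    0 < NInd Φ μ A := by
  set S := {k : ℝ | 0 < k ∧ (∫⁻ x, Φ (A.indicator (fun _ => (1 : ℝ)) x / k) ∂μ) ≤ 1} with hS
  have hmem : ∀ k : ℝ, k ∈ S ↔ 0 < k ∧ Φ (1 / k) * μ A ≤ 1 := by
    intro k
    rw [hS, Set.mem_setOf_eq, lintegral_ind_formula μ Φ hΦ.map_zero hA]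
  -- nonemptiness
  set c : ℝ≥0∞ := Φ x0 * μ A with hc
  have hcne : c ≠ ⊤ := ENNReal.mul_ne_top hfin h1.ne
  set t : ℝ := min 1 (1 / (c.toReal + 1)) with ht
  have hct : 0 ≤ c.toReal := ENNReal.toReal_nonneg
  have ht0 : 0 < t := lt_min one_pos (by positivity)
  have ht1 : t ≤ 1 := min_le_left _ _
  have hΦt : Φ (t * x0) ≤ ENNReal.ofReal t * Φ x0 := by
    have := hΦ.convexity x0 0 t ht0.le ht1
    simpa [hΦ.map_zero] using this
  have htc : ENNReal.ofReal t * c ≤ 1 := by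
    have h1' : ENNReal.ofReal t ≤ ENNReal.ofReal (1 / (c.toReal + 1)) :=
      ENNReal.ofReal_le_ofReal (min_le_right _ _)
    have h2' : ENNReal.ofReal (1 / (c.toReal + 1)) * c =
        ENNReal.ofReal (1 / (c.toReal + 1) * c.toReal) := by
      rw [ENNReal.ofReal_mul (by positivity), ENNReal.ofReal_toReal hcne]
    have h3' : (1 / (c.toReal + 1) * c.toReal : ℝ) ≤ 1 := by
      rw [div_mul_eq_mul_div, one_mul, div_le_one (by positivity)]
      linarith
    calc ENNReal.ofReal t * c ≤ ENNReal.ofReal (1 / (c.toReal + 1)) * c :=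
          mul_le_mul_left h1' _
      _ = ENNReal.ofReal (1 / (c.toReal + 1) * c.toReal) := h2'
      _ ≤ 1 := by simpa using ENNReal.ofReal_le_ofReal h3'
  have hne : (1 / (t * x0)) ∈ S := by
    rw [hmem]
    constructor
    · positivity
    · rw [one_div_one_div]
      calc Φ (t * x0) * μ A ≤ ENNReal.ofReal t * Φ x0 * μ A :=
            mul_le_mul_left hΦt _
        _ = ENNReal.ofReal t * c := by rw [hc, mul_assoc]
        _ ≤ 1 := htc
  -- lower bound
  have hinv : (μ A)⁻¹ < ⊤ := ENNReal.inv_lt_top.mpr h0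
  have hev : ∀ᶠ x in atTop, Φ x ∈ Ioi (μ A)⁻¹ :=
    hΦ.tendsto_top.eventually (Ioi_mem_nhds hinv)
  obtain ⟨M, hM⟩ := eventually_atTop.mp hev
  set M' : ℝ := max M 1 with hM'
  have hM'0 : 0 < M' := lt_of_lt_of_le one_pos (le_max_right _ _)
  have hlb : ∀ k ∈ S, 1 / M' ≤ k := by
    intro k hk
    rw [hmem] at hk
    by_contra hcon
    push_neg at hcon
    have hk0 : 0 < k := hk.1
    have : M' < 1 / k := by
      rw [lt_div_iff₀ hk0]
      calc M' * k < M' * (1 / M') := by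
            exact mul_lt_mul_of_pos_left hcon hM'0
        _ = 1 := by field_simp
    have hΦk : (μ A)⁻¹ < Φ (1 / k) := hM _ (le_trans (le_max_left _ _) this.le)
    have : (1 : ℝ≥0∞) < Φ (1 / k) * μ A := by
      calc (1 : ℝ≥0∞) = (μ A)⁻¹ * μ A := (ENNReal.inv_mul_cancel h0.ne' h1.ne).symm
        _ < Φ (1 / k) * μ A := by
            rw [mul_comm (μ A)⁻¹, mul_comm (Φ (1 / k))]
            exact ENNReal.mul_lt_mul_right h0.ne' h1.ne hΦk
    exact absurd hk.2 (not_le.mpr this)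
  have : 1 / M' ≤ sInf S := le_csInf ⟨_, hne⟩ hlb
  calc (0 : ℝ) < 1 / M' := by positivity
    _ ≤ sInf S := this

lemma NInd_eq_zero_of_top {X : Type*} [MeasurableSpace X] (μ : Measure X)
    {Φ : ℝ → ℝ≥0∞} (hΦ0 : Φ 0 = 0) (htop : ∀ x : ℝ, 0 < x → Φ x = ⊤)
    {A : Set X} (hA : MeasurableSet A) : NInd Φ μ A = 0 := by
  set S := {k : ℝ | 0 < k ∧ (∫⁻ x, Φ (A.indicator (fun _ => (1 : ℝ)) x / k) ∂μ) ≤ 1} with hS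
  have hmem : ∀ k : ℝ, k ∈ S ↔ 0 < k ∧ Φ (1 / k) * μ A ≤ 1 := by
    intro k
    rw [hS, Set.mem_setOf_eq, lintegral_ind_formula μ Φ hΦ0 hA]
  show sInf S = 0
  rcases eq_or_ne (μ A) 0 with hμ | hμ
  · refine le_antisymm ?_ (Real.sInf_nonneg fun _ hx => hx.1.le)
    by_contra hcon
    push_neg at hcon
    have hbdd : BddBelow S := ⟨0, fun x hx => hx.1.le⟩
    have hSmem : sInf S / 2 ∈ S := by
      rw [hmem]
      exact ⟨by linarith, by rw [hμ, mul_zero]; exact zero_le_one⟩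
    have := csInf_le hbdd hSmem
    linarith
  · have : S = ∅ := by
      ext k
      simp only [Set.mem_empty_iff_false, iff_false]
      intro hk
      rw [hmem] at hk
      have h2 : Φ (1 / k) * μ A = ⊤ := by
        rw [htop _ (one_div_pos.mpr hk.1), ENNReal.top_mul hμ]
      rw [h2] at hk
      exact absurd hk.2 (by simp)
    rw [this, Real.sInf_empty]

lemma ratio_alg {K a0 b0 as ats bs bts : ℝ} (hK : 0 < K) (ha0 : 0 < a0) (hb0 : 0 < b0)
    (has : 0 ≤ as) (hats : 0 ≤ ats) (hbs : 0 ≤ bs) (hbts : 0 ≤ bts)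
    (h1 : 1 / K * (ats / a0) ≤ bts / b0) (h2 : bts / b0 ≤ K * (ats / a0))
    (h3 : 1 / K * (as / a0) ≤ bs / b0) (h4 : bs / b0 ≤ K * (as / a0)) :
    1 / (K * K) * (ats / as) ≤ bts / bs ∧ bts / bs ≤ K * K * (ats / as) := by
  rcases eq_or_lt_of_le has with has0 | hasp
  · -- as = 0
    have has0 : as = 0 := has0.symm
    subst has0
    have h4' : bs / b0 ≤ 0 := by simpa using h4
    have hbs0 : bs = 0 := by
      refine le_antisymm ?_ hbs
      have := mul_le_mul_of_nonneg_right h4' hb0.le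
      rwa [div_mul_cancel₀ _ hb0.ne', zero_mul] at this
    subst hbs0
    constructor <;> simp [div_zero]
  · -- as > 0
    have hbsp : 0 < bs := by
      have hpos : 0 < 1 / K * (as / a0) := by positivity
      have : 0 < bs / b0 := lt_of_lt_of_le hpos h3
      exact (div_pos_iff.mp this).resolve_right (fun h => absurd hb0 (not_lt.mpr h.2.le)) |>.1
    have e1 : ats * b0 ≤ bts * (K * a0) := by
      rw [div_mul_div_comm, one_mul, div_le_div_iff₀ (by positivity) hb0] at h1
      exact h1
    have e2 : bts * a0 ≤ K * ats * b0 := by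
      rw [← mul_div_assoc, div_le_div_iff₀ hb0 ha0] at h2
      exact h2
    have e3 : as * b0 ≤ bs * (K * a0) := by
      rw [div_mul_div_comm, one_mul, div_le_div_iff₀ (by positivity) hb0] at h3
      exact h3
    have e4 : bs * a0 ≤ K * as * b0 := by
      rw [← mul_div_assoc, div_le_div_iff₀ hb0 ha0] at h4
      exact h4
    constructor
    · rw [div_mul_div_comm, one_mul, div_le_div_iff₀ (by positivity) hbsp]
      have hm := mul_le_mul e1 e4 (by positivity) (by positivity)
      nlinarith [mul_pos ha0 hb0]
    · rw [← mul_div_assoc, div_le_div_iff₀ hbsp hasp]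
      have hm := mul_le_mul e2 e3 (by positivity) (by positivity)
      nlinarith [mul_pos ha0 hb0]

lemma measurable_zIter {X : Type*} [MeasurableSpace X] {φ ψ : X → X}
    (hφ : Measurable φ) (hψ : Measurable ψ) (n : ℤ) : Measurable (zIter φ ψ n) := by
  unfold zIter
  split
  · exact hφ.iterate _
  · exact hψ.iterate _

/-- in a dissipative system of bounded distortion generated by `W`
(distortion constant `K`), there is `H > 0` such that for all `F ∈ 𝓕_W` with
`μ(F) > 0` and all `s, t ∈ ℤ`,
`(1/H)·N_Φ(C_φ^{t+s}χ_W)/N_Φ(C_φ^s χ_W) ≤ N_Φ(C_φ^{t+s}χ_F)/N_Φ(C_φ^s χ_F)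
  ≤ H·N_Φ(C_φ^{t+s}χ_W)/N_Φ(C_φ^s χ_W)`. -/
theorem dissipative_boundedDistortion_two_sided {X : Type*} [MeasurableSpace X]
    (μ : Measure X) (Φ : ℝ → ℝ≥0∞) (hΦ : IsYoungFunction Φ)
    (φ ψ : X → X) (hφ : Measurable φ) (hψ : Measurable ψ)
    (hinv₁ : Function.LeftInverse ψ φ) (hinv₂ : Function.RightInverse ψ φ)
    (W : Set X) (hW : MeasurableSet W) (hW0 : 0 < μ W) (hW1 : μ W < ⊤)
    (hcover : ∀ x : X, ∃ k : ℤ, x ∈ zIter φ ψ (-k) ⁻¹' W)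
    (hdisj : ∀ j k : ℤ, j ≠ k →
      Disjoint (zIter φ ψ (-j) ⁻¹' W) (zIter φ ψ (-k) ⁻¹' W))
    (K : ℝ) (hK : 0 < K)
    (hdistortion : ∀ k : ℤ, ∀ F : Set X, MeasurableSet F → F ⊆ W → 0 < μ F →
      (1 / K) * (NInd Φ μ (zIter φ ψ k ⁻¹' W) / NInd Φ μ W) ≤
          NInd Φ μ (zIter φ ψ k ⁻¹' F) / NInd Φ μ F ∧
        NInd Φ μ (zIter φ ψ k ⁻¹' F) / NInd Φ μ F ≤
          K * (NInd Φ μ (zIter φ ψ k ⁻¹' W) / NInd Φ μ W)) :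
    ∃ H : ℝ, 0 < H ∧ ∀ F : Set X, MeasurableSet F → F ⊆ W → 0 < μ F →
      ∀ s t : ℤ,
        (1 / H) * (NInd Φ μ (zIter φ ψ (t + s) ⁻¹' W) / NInd Φ μ (zIter φ ψ s ⁻¹' W)) ≤
            NInd Φ μ (zIter φ ψ (t + s) ⁻¹' F) / NInd Φ μ (zIter φ ψ s ⁻¹' F) ∧
          NInd Φ μ (zIter φ ψ (t + s) ⁻¹' F) / NInd Φ μ (zIter φ ψ s ⁻¹' F) ≤
            H * (NInd Φ μ (zIter φ ψ (t + s) ⁻¹' W) / NInd Φ μ (zIter φ ψ s ⁻¹' W)) := by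
  refine ⟨K * K, by positivity, ?_⟩
  intro F hF hFW hμF s t
  by_cases hdeg : ∀ x : ℝ, 0 < x → Φ x = ⊤
  · have hz : ∀ n : ℤ, ∀ A : Set X, MeasurableSet A →
        NInd Φ μ (zIter φ ψ n ⁻¹' A) = 0 := fun n A hA =>
      NInd_eq_zero_of_top μ hΦ.map_zero hdeg (hA.preimage (measurable_zIter hφ hψ n))
    rw [hz _ _ hW, hz _ _ hW, hz _ _ hF, hz _ _ hF]
    norm_num
  · push_neg at hdeg
    obtain ⟨x0, hx0, hfin⟩ := hdeg
    have ha0 : 0 < NInd Φ μ W := NInd_pos hΦ hx0 hfin hW hW0 hW1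
    have hb0 : 0 < NInd Φ μ F :=
      NInd_pos hΦ hx0 hfin hF hμF (lt_of_le_of_lt (measure_mono hFW) hW1)
    obtain ⟨h1, h2⟩ := hdistortion (t + s) F hF hFW hμF
    obtain ⟨h3, h4⟩ := hdistortion s F hF hFW hμF
    exact ratio_alg hK ha0 hb0 (NInd_nonneg _ _ _) (NInd_nonneg _ _ _)
      (NInd_nonneg _ _ _) (NInd_nonneg _ _ _) h1 h2 h3 h4
end
end

section
/- Let (X,𝓕,μ,φ,C_φ) be a dissipative composition dynamical system of bounded distortion generated by W. Then C_φ is expansive if and only if inf_{n∈ℤ} Φ^{-1}(1/μ(φ^n(W))) = 0. -/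
open MeasureTheory ENNReal Filter Set Topology

noncomputable section

namespace Aux

variable {Φ : ℝ → ℝ≥0∞}

lemma phi_smul (hΦ : IsYoungFunction Φ) {t : ℝ} (x : ℝ) (ht0 : 0 ≤ t) (ht1 : t ≤ 1) :
    Φ (t * x) ≤ ENNReal.ofReal t * Φ x := by
  have h := hΦ.convexity x 0 t ht0 ht1
  simpa [hΦ.map_zero] using h

lemma phi_mono (hΦ : IsYoungFunction Φ) {x y : ℝ} (hx : 0 ≤ x) (hxy : x ≤ y) :
    Φ x ≤ Φ y := by
  rcases eq_or_lt_of_le (hx.trans hxy) with h | hy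
  · have hx0 : x = 0 := le_antisymm (hxy.trans h.symm.le) hx
    simp [hx0, ← h, hΦ.map_zero]
  · have ht0 : 0 ≤ x / y := div_nonneg hx hy.le
    have ht1 : x / y ≤ 1 := (div_le_one hy).2 hxy
    have h := phi_smul hΦ y ht0 ht1
    rw [div_mul_cancel₀ _ hy.ne'] at h
    calc Φ x ≤ ENNReal.ofReal (x / y) * Φ y := h
    _ ≤ 1 * Φ y := mul_le_mul_left (ENNReal.ofReal_le_one.2 ht1) _
    _ = Φ y := one_mul _

lemma phi_abs (hΦ : IsYoungFunction Φ) (x : ℝ) : Φ |x| = Φ x := by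
  rcases abs_cases x with ⟨h, _⟩ | ⟨h, _⟩
  · rw [h]
  · rw [h, hΦ.even]

lemma phi_measurable (hΦ : IsYoungFunction Φ) : Measurable Φ := by
  have hg : Monotone (fun y : ℝ => Φ (max y 0)) := fun a b hab =>
    phi_mono hΦ (le_max_right a 0) (max_le_max hab le_rfl)
  have : Φ = (fun y : ℝ => Φ (max y 0)) ∘ (fun x : ℝ => |x|) := by
    funext x
    simp only [Function.comp_apply, max_eq_left (abs_nonneg x), phi_abs hΦ]
  rw [this]
  exact hg.measurable.comp measurable_id.abs

lemma phi_eventually_gt (hΦ : IsYoungFunction Φ) {a : ℝ≥0∞} (ha : a < ⊤) :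
    ∃ x₀ : ℝ, 0 < x₀ ∧ ∀ x, x₀ ≤ x → a < Φ x := by
  have h := hΦ.tendsto_top.eventually (eventually_gt_nhds ha)
  rcases eventually_atTop.1 h with ⟨x₀, hx₀⟩
  exact ⟨max x₀ 1, lt_of_lt_of_le one_pos (le_max_right _ _),
    fun x hx => hx₀ x ((le_max_left _ _).trans hx)⟩

lemma sprimeSet_bddAbove (hΦ : IsYoungFunction Φ) {a : ℝ≥0∞} (ha : a < ⊤) :
    BddAbove {x : ℝ | 0 ≤ x ∧ Φ x ≤ a} := by
  obtain ⟨x₀, _, hx₀⟩ := phi_eventually_gt hΦ ha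
  refine ⟨x₀, fun x hx => ?_⟩
  by_contra hc
  exact absurd hx.2 (not_le.2 (hx₀ x (le_of_not_ge hc)))

lemma PhiInv_nonneg (hΦ : IsYoungFunction Φ) (y : ℝ≥0∞) : 0 ≤ PhiInv Φ y := by
  by_cases hb : BddAbove {x : ℝ | 0 ≤ x ∧ Φ x ≤ y}
  · exact le_csSup hb ⟨le_rfl, by simp [hΦ.map_zero]⟩
  · rw [PhiInv, Real.sSup_of_not_bddAbove hb]

lemma helper_ofReal (B a : ℝ≥0∞) (hB : B ≠ ⊤) (ha : 0 < a) :
    ∃ t : ℝ, 0 < t ∧ t ≤ 1 ∧ ENNReal.ofReal t * B ≤ a := by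
  rcases eq_or_ne a ⊤ with rfl | haT
  · exact ⟨1, one_pos, le_rfl, le_top⟩
  · set b := B.toReal with hb
    have hbnn : 0 ≤ b := ENNReal.toReal_nonneg
    have hapos : 0 < a.toReal := ENNReal.toReal_pos ha.ne' haT
    refine ⟨min 1 (a.toReal / (b + 1)), lt_min one_pos (by positivity), min_le_left _ _, ?_⟩
    have h1 : ENNReal.ofReal (min 1 (a.toReal / (b + 1))) ≤ ENNReal.ofReal (a.toReal / (b + 1)) :=
      ENNReal.ofReal_le_ofReal (min_le_right _ _)
    have h2 : B = ENNReal.ofReal b := (ENNReal.ofReal_toReal hB).symm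
    calc ENNReal.ofReal (min 1 (a.toReal / (b + 1))) * B
        ≤ ENNReal.ofReal (a.toReal / (b + 1)) * ENNReal.ofReal b := by
          rw [← h2]; exact mul_le_mul_left h1 _
      _ = ENNReal.ofReal (a.toReal / (b + 1) * b) := (ENNReal.ofReal_mul (by positivity)).symm
      _ ≤ ENNReal.ofReal a.toReal := by
          apply ENNReal.ofReal_le_ofReal
          rw [div_mul_eq_mul_div]
          apply div_le_of_le_mul₀ (by positivity) hapos.le
          nlinarith
      _ = a := ENNReal.ofReal_toReal haT

lemma PhiInv_pos (hΦ : IsYoungFunction Φ) {x₁ : ℝ} (hx₁ : 0 < x₁) (hΦx₁ : Φ x₁ ≠ ⊤)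
    {y : ℝ≥0∞} (hy : 0 < y) (hyT : y < ⊤) : 0 < PhiInv Φ y := by
  obtain ⟨t, ht0, ht1, ht⟩ := helper_ofReal (Φ x₁) y hΦx₁ hy
  have hmem : t * x₁ ∈ {x : ℝ | 0 ≤ x ∧ Φ x ≤ y} :=
    ⟨by positivity, le_trans (phi_smul hΦ x₁ ht0.le ht1) ht⟩
  have hpos : (0:ℝ) < t * x₁ := by positivity
  exact lt_of_lt_of_le hpos (le_csSup (sprimeSet_bddAbove hΦ hyT) hmem)

variable {X : Type*} [MeasurableSpace X] {μ : Measure X}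

lemma lintegral_phi_ind_div (hΦ : IsYoungFunction Φ) {A : Set X} (hA : MeasurableSet A)
    (k : ℝ) : ∫⁻ x, Φ (A.indicator (fun _ => (1:ℝ)) x / k) ∂μ = Φ (1/k) * μ A := by
  have heq : (fun x => Φ (A.indicator (fun _ => (1:ℝ)) x / k))
      = A.indicator (fun _ => Φ (1/k)) := by
    funext x
    by_cases hx : x ∈ A
    · simp [Set.indicator_of_mem hx]
    · simp [Set.indicator_of_notMem hx, hΦ.map_zero]
  rw [heq]
  exact lintegral_indicator_const hA _

lemma lintegral_phi_ind_mul (hΦ : IsYoungFunction Φ) {A : Set X} (hA : MeasurableSet A)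
    (k : ℝ) : ∫⁻ x, Φ (k * A.indicator (fun _ => (1:ℝ)) x) ∂μ = Φ k * μ A := by
  have heq : (fun x => Φ (k * A.indicator (fun _ => (1:ℝ)) x))
      = A.indicator (fun _ => Φ k) := by
    funext x
    by_cases hx : x ∈ A
    · simp [Set.indicator_of_mem hx]
    · simp [Set.indicator_of_notMem hx, hΦ.map_zero]
  rw [heq]
  exact lintegral_indicator_const hA _

lemma luxSet_bddBelow (f : X → ℝ) :
    BddBelow {k : ℝ | 0 < k ∧ (∫⁻ x, Φ (f x / k) ∂μ) ≤ 1} :=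
  ⟨0, fun k hk => hk.1.le⟩

lemma LuxNorm_nonneg (f : X → ℝ) : 0 ≤ LuxNorm Φ μ f :=
  Real.sInf_nonneg fun k hk => hk.1.le

lemma NInd_nonneg (A : Set X) : 0 ≤ NInd Φ μ A := LuxNorm_nonneg _

lemma NInd_le (hΦ : IsYoungFunction Φ) {A : Set X} (hA : MeasurableSet A) {x : ℝ}
    (hx : 0 < x) (h : Φ x * μ A ≤ 1) : NInd Φ μ A ≤ 1/x := by
  apply csInf_le (luxSet_bddBelow _)
  refine ⟨by positivity, ?_⟩
  rw [lintegral_phi_ind_div hΦ hA, one_div_one_div]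
  exact h

lemma luxSet_ind_nonempty (hΦ : IsYoungFunction Φ) {x₁ : ℝ} (hx₁ : 0 < x₁)
    (hΦx₁ : Φ x₁ ≠ ⊤) {A : Set X} (hA : MeasurableSet A) (hAT : μ A < ⊤) :
    ∃ k : ℝ, 0 < k ∧ (∫⁻ x, Φ (A.indicator (fun _ => (1:ℝ)) x / k) ∂μ) ≤ 1 := by
  have hB : Φ x₁ * μ A ≠ ⊤ := ENNReal.mul_ne_top hΦx₁ hAT.ne
  obtain ⟨t, ht0, ht1, ht⟩ := helper_ofReal (Φ x₁ * μ A) 1 hB one_pos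
  set s := t * x₁ with hs
  have hspos : 0 < s := by positivity
  refine ⟨1/s, by positivity, ?_⟩
  rw [lintegral_phi_ind_div hΦ hA, one_div_one_div]
  calc Φ s * μ A ≤ (ENNReal.ofReal t * Φ x₁) * μ A :=
        mul_le_mul_left (phi_smul hΦ x₁ ht0.le ht1) _
    _ = ENNReal.ofReal t * (Φ x₁ * μ A) := mul_assoc _ _ _
    _ ≤ 1 := ht

lemma NInd_pos (hΦ : IsYoungFunction Φ) {x₁ : ℝ} (hx₁ : 0 < x₁) (hΦx₁ : Φ x₁ ≠ ⊤)
    {A : Set X} (hA : MeasurableSet A) (h0 : 0 < μ A) (hT : μ A < ⊤) :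
    0 < NInd Φ μ A := by
  have h1T : 1 / μ A < ⊤ := ENNReal.div_lt_top one_ne_top h0.ne'
  obtain ⟨x₀, hx₀, hgt⟩ := phi_eventually_gt hΦ h1T
  have hne := luxSet_ind_nonempty hΦ hx₁ hΦx₁ hA hT
  have hkey : (1:ℝ)/x₀ ≤ NInd Φ μ A := by
    apply le_csInf hne
    rintro k ⟨hk, hint⟩
    rw [lintegral_phi_ind_div hΦ hA] at hint
    have hle : Φ (1/k) ≤ 1 / μ A :=
      (ENNReal.le_div_iff_mul_le (Or.inl h0.ne') (Or.inr one_ne_top)).2 hint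
    have hlt : 1/k < x₀ := by
      by_contra hc
      exact absurd hle (not_le.2 (hgt _ (le_of_not_gt hc)))
    rw [div_lt_iff₀ hk] at hlt
    rw [div_le_iff₀ hx₀]
    nlinarith
  exact lt_of_lt_of_le (by positivity) hkey

lemma NInd_ge (hΦ : IsYoungFunction Φ) {x₁ : ℝ} (hx₁ : 0 < x₁) (hΦx₁ : Φ x₁ ≠ ⊤)
    {A : Set X} (hA : MeasurableSet A) (h0 : 0 < μ A) (hT : μ A < ⊤) :
    1 / PhiInv Φ (1 / μ A) ≤ NInd Φ μ A := by
  set a := PhiInv Φ (1 / μ A) with ha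
  rcases le_or_gt a 0 with h | hapos
  · exact le_trans (by simpa using one_div_nonpos.2 h) (NInd_nonneg A)
  have h1T : 1 / μ A < ⊤ := ENNReal.div_lt_top one_ne_top h0.ne'
  have hbdd := sprimeSet_bddAbove hΦ h1T
  apply le_csInf (luxSet_ind_nonempty hΦ hx₁ hΦx₁ hA hT)
  rintro k ⟨hk, hint⟩
  rw [lintegral_phi_ind_div hΦ hA] at hint
  have hle : Φ (1/k) ≤ 1 / μ A :=
    (ENNReal.le_div_iff_mul_le (Or.inl h0.ne') (Or.inr one_ne_top)).2 hint
  have hmem : 1/k ∈ {x : ℝ | 0 ≤ x ∧ Φ x ≤ 1 / μ A} := ⟨by positivity, hle⟩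
  have hka : 1/k ≤ a := le_csSup hbdd hmem
  rw [div_le_iff₀ hk] at hka
  rw [div_le_iff₀ hapos]
  linarith [mul_comm a k]

lemma lux_lower (hΦ : IsYoungFunction Φ) {f : X → ℝ} {A : Set X} (hA : MeasurableSet A)
    {δ : ℝ} (hδ : 0 < δ) (hpt : ∀ x ∈ A, δ ≤ |f x|)
    (hne : ∃ k : ℝ, 0 < k ∧ (∫⁻ x, Φ (f x / k) ∂μ) ≤ 1) :
    δ * NInd Φ μ A ≤ LuxNorm Φ μ f := by
  apply le_csInf hne
  rintro k ⟨hk, hint⟩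
  have hkδ : 0 < k/δ := div_pos hk hδ
  have h1 : NInd Φ μ A ≤ k/δ := by
    apply csInf_le (luxSet_bddBelow _)
    refine ⟨hkδ, le_trans (lintegral_mono fun x => ?_) hint⟩
    by_cases hx : x ∈ A
    · rw [Set.indicator_of_mem hx]
      rw [← phi_abs hΦ ((1:ℝ)/(k/δ)), ← phi_abs hΦ (f x / k)]
      apply phi_mono hΦ (abs_nonneg _)
      rw [abs_div (f x) k, abs_of_pos hk,
        abs_of_pos (show (0:ℝ) < 1/(k/δ) by positivity), one_div_div]
      exact (div_le_div_iff_of_pos_right hk).2 (hpt x hx)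
    · rw [Set.indicator_of_notMem hx]
      simp [hΦ.map_zero]
  calc δ * NInd Φ μ A ≤ δ * (k/δ) := mul_le_mul_of_nonneg_left h1 hδ.le
    _ = k := by field_simp

lemma perm_pow_coe (e : Equiv.Perm X) (n : ℕ) : ⇑(e ^ n) = (⇑e)^[n] := by
  induction n with
  | zero => rfl
  | succ k ih =>
    ext x
    rw [pow_succ, Equiv.Perm.mul_apply, Function.iterate_succ, Function.comp_apply]
    exact congrFun ih (e x)

variable {φ ψ : X → X}

def perm (hinv₁ : Function.LeftInverse ψ φ) (hinv₂ : Function.RightInverse ψ φ) :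
    Equiv.Perm X := ⟨φ, ψ, hinv₁, hinv₂⟩

lemma zIter_eq (hinv₁ : Function.LeftInverse ψ φ) (hinv₂ : Function.RightInverse ψ φ)
    (n : ℤ) : zIter φ ψ n = ⇑((perm hinv₁ hinv₂) ^ n) := by
  set e := perm hinv₁ hinv₂ with he
  by_cases hn : 0 ≤ n
  · have h1 : n = ((n.toNat : ℕ) : ℤ) := by omega
    rw [zIter, if_pos hn, h1, zpow_natCast, perm_pow_coe]
    rfl
  · obtain ⟨m, rfl⟩ : ∃ m : ℕ, n = -(m:ℤ) := ⟨(-n).toNat, by omega⟩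
    rw [zIter, if_neg hn, zpow_neg, zpow_natCast, ← inv_pow, perm_pow_coe]
    simp only [neg_neg, Int.toNat_natCast]
    rfl

lemma zIter_zero : zIter φ ψ 0 = id := by
  rw [zIter, if_pos le_rfl]
  rfl

lemma zIter_apply_zIter (hinv₁ : Function.LeftInverse ψ φ)
    (hinv₂ : Function.RightInverse ψ φ) (a b : ℤ) (x : X) :
    zIter φ ψ a (zIter φ ψ b x) = zIter φ ψ (a + b) x := by
  rw [zIter_eq hinv₁ hinv₂ a, zIter_eq hinv₁ hinv₂ b, zIter_eq hinv₁ hinv₂ (a+b), zpow_add]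
  rfl

lemma zIter_preimage_comp (hinv₁ : Function.LeftInverse ψ φ)
    (hinv₂ : Function.RightInverse ψ φ) (a b : ℤ) (A : Set X) :
    zIter φ ψ b ⁻¹' (zIter φ ψ a ⁻¹' A) = zIter φ ψ (a + b) ⁻¹' A := by
  ext x
  simp only [Set.mem_preimage, zIter_apply_zIter hinv₁ hinv₂]

lemma zIter_measurable (hφ : Measurable φ) (hψ : Measurable ψ) (n : ℤ) :
    Measurable (zIter φ ψ n) := by
  rw [zIter]
  split
  · exact hφ.iterate _
  · exact hψ.iterate _

variable {c c' : ℝ≥0∞}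

lemma iterate_bound {f : X → X} (hf : Measurable f) {d : ℝ≥0∞}
    (hb : ∀ A : Set X, MeasurableSet A → μ (f ⁻¹' A) ≤ d * μ A) (n : ℕ) :
    ∀ A : Set X, MeasurableSet A → μ (f^[n] ⁻¹' A) ≤ d ^ n * μ A := by
  induction n with
  | zero => intro A hA; simp
  | succ k ih =>
    intro A hA
    have h1 : f^[k+1] ⁻¹' A = f ⁻¹' (f^[k] ⁻¹' A) := by
      rw [Function.iterate_succ]
      rfl
    rw [h1]
    calc μ (f ⁻¹' (f^[k] ⁻¹' A)) ≤ d * μ (f^[k] ⁻¹' A) :=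
          hb _ ((hf.iterate k) hA)
      _ ≤ d * (d ^ k * μ A) := mul_le_mul_right (ih A hA) _
      _ = d ^ (k+1) * μ A := by ring

lemma zIter_bound (hφ : Measurable φ) (hψ : Measurable ψ)
    (hbound : ∀ A : Set X, MeasurableSet A → μ (φ ⁻¹' A) ≤ c * μ A)
    (hbound' : ∀ A : Set X, MeasurableSet A → μ (ψ ⁻¹' A) ≤ c' * μ A)
    (n : ℤ) (A : Set X) (hA : MeasurableSet A) :
    μ (zIter φ ψ n ⁻¹' A) ≤ (max c c') ^ n.natAbs * μ A := by
  rw [zIter]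
  split
  · have h1 : n.toNat = n.natAbs := by omega
    calc μ (φ^[n.toNat] ⁻¹' A) ≤ c ^ n.toNat * μ A := iterate_bound hφ hbound n.toNat A hA
      _ ≤ (max c c') ^ n.natAbs * μ A := by
          rw [h1]; exact mul_le_mul_left (pow_le_pow_left' (le_max_left _ _) _) _
  · have h1 : (-n).toNat = n.natAbs := by omega
    calc μ (ψ^[(-n).toNat] ⁻¹' A) ≤ c' ^ (-n).toNat * μ A :=
          iterate_bound hψ hbound' (-n).toNat A hA
      _ ≤ (max c c') ^ n.natAbs * μ A := by
          rw [h1]; exact mul_le_mul_left (pow_le_pow_left' (le_max_right _ _) _) _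

lemma zIter_bound_rev (hinv₁ : Function.LeftInverse ψ φ)
    (hinv₂ : Function.RightInverse ψ φ) (hφ : Measurable φ) (hψ : Measurable ψ)
    (hbound : ∀ A : Set X, MeasurableSet A → μ (φ ⁻¹' A) ≤ c * μ A)
    (hbound' : ∀ A : Set X, MeasurableSet A → μ (ψ ⁻¹' A) ≤ c' * μ A)
    (n : ℤ) (A : Set X) (hA : MeasurableSet A) :
    μ A ≤ (max c c') ^ n.natAbs * μ (zIter φ ψ n ⁻¹' A) := by
  have h1 : A = zIter φ ψ (-n) ⁻¹' (zIter φ ψ n ⁻¹' A) := by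
    rw [zIter_preimage_comp hinv₁ hinv₂, add_neg_cancel, zIter_zero, Set.preimage_id]
  have h2 : (-n).natAbs = n.natAbs := by omega
  calc μ A = μ (zIter φ ψ (-n) ⁻¹' (zIter φ ψ n ⁻¹' A)) := by rw [← h1]
    _ ≤ (max c c') ^ (-n).natAbs * μ (zIter φ ψ n ⁻¹' A) :=
        zIter_bound hφ hψ hbound hbound' (-n) _ ((zIter_measurable hφ hψ n) hA)
    _ = (max c c') ^ n.natAbs * μ (zIter φ ψ n ⁻¹' A) := by rw [h2]

lemma lintegral_comp_zIter (hφ : Measurable φ) (hψ : Measurable ψ)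
    (hbound : ∀ A : Set X, MeasurableSet A → μ (φ ⁻¹' A) ≤ c * μ A)
    (hbound' : ∀ A : Set X, MeasurableSet A → μ (ψ ⁻¹' A) ≤ c' * μ A)
    (n : ℤ) {g : X → ℝ≥0∞} (hg : Measurable g) :
    ∫⁻ x, g (zIter φ ψ n x) ∂μ ≤ (max c c') ^ n.natAbs * ∫⁻ x, g x ∂μ := by
  rw [← lintegral_map hg (zIter_measurable hφ hψ n)]
  have hle : μ.map (zIter φ ψ n) ≤ ((max c c') ^ n.natAbs) • μ := by
    refine Measure.le_iff.2 fun s hs => ?_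
    rw [Measure.map_apply (zIter_measurable hφ hψ n) hs, Measure.smul_apply, smul_eq_mul]
    exact zIter_bound hφ hψ hbound hbound' n s hs
  calc ∫⁻ x, g x ∂(μ.map (zIter φ ψ n)) ≤ ∫⁻ x, g x ∂(((max c c') ^ n.natAbs) • μ) :=
        lintegral_mono' hle le_rfl
    _ = (max c c') ^ n.natAbs * ∫⁻ x, g x ∂μ := lintegral_smul_measure _ _

end Aux

/-- in a dissipative composition dynamical system of bounded distortion
generated by `W`, `C_φ` is expansive if and only if
`inf_{n ∈ ℤ} Φ⁻¹(1/μ(φ^n(W))) = 0`. -/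
theorem dissipative_expansive_iff {X : Type*} [MeasurableSpace X]
    (μ : Measure X) [SigmaFinite μ] (Φ : ℝ → ℝ≥0∞) (hΦ : IsYoungFunction Φ)
    (φ ψ : X → X) (hφ : Measurable φ) (hψ : Measurable ψ)
    (hinv₁ : Function.LeftInverse ψ φ) (hinv₂ : Function.RightInverse ψ φ)
    (c c' : ℝ≥0∞) (hc : 0 < c) (hcT : c < ⊤) (hc' : 0 < c') (hc'T : c' < ⊤)
    (hbound : ∀ A : Set X, MeasurableSet A → μ (φ ⁻¹' A) ≤ c * μ A)
    (hbound' : ∀ A : Set X, MeasurableSet A → μ (ψ ⁻¹' A) ≤ c' * μ A)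
    (W : Set X) (hW : MeasurableSet W) (hW0 : 0 < μ W) (hW1 : μ W < ⊤)
    (hcover : ∀ x : X, ∃ k : ℤ, x ∈ zIter φ ψ (-k) ⁻¹' W)
    (hdisj : ∀ j k : ℤ, j ≠ k →
      Disjoint (zIter φ ψ (-j) ⁻¹' W) (zIter φ ψ (-k) ⁻¹' W))
    (K : ℝ) (hK : 0 < K)
    (hdistortion : ∀ k : ℤ, ∀ F : Set X, MeasurableSet F → F ⊆ W → 0 < μ F →
      (1 / K) * (NInd Φ μ (zIter φ ψ k ⁻¹' W) / NInd Φ μ W) ≤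
          NInd Φ μ (zIter φ ψ k ⁻¹' F) / NInd Φ μ F ∧
        NInd Φ μ (zIter φ ψ k ⁻¹' F) / NInd Φ μ F ≤
          K * (NInd Φ μ (zIter φ ψ k ⁻¹' W) / NInd Φ μ W)) :
    (∀ f : X → ℝ, MemOrlicz Φ μ f → ¬ f =ᵐ[μ] 0 →
        ∀ M : ℝ, ∃ n : ℤ, M ≤ LuxNorm Φ μ (f ∘ zIter φ ψ n)) ↔
      (⨅ n : ℤ, PhiInv Φ (1 / μ (zIter φ ψ (-n) ⁻¹' W))) = 0 := by
  constructor
  · -- expansive → inf = 0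
    intro hexp
    by_contra hne
    have hanonneg : ∀ n : ℤ, 0 ≤ PhiInv Φ (1 / μ (zIter φ ψ (-n) ⁻¹' W)) :=
      fun n => Aux.PhiInv_nonneg hΦ _
    have hinf0 : 0 ≤ ⨅ n : ℤ, PhiInv Φ (1 / μ (zIter φ ψ (-n) ⁻¹' W)) := le_ciInf hanonneg
    have hεpos : 0 < ⨅ n : ℤ, PhiInv Φ (1 / μ (zIter φ ψ (-n) ⁻¹' W)) :=
      lt_of_le_of_ne hinf0 (Ne.symm hne)
    set ε := ⨅ n : ℤ, PhiInv Φ (1 / μ (zIter φ ψ (-n) ⁻¹' W)) with hεdef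
    have hbb : BddBelow (Set.range fun n : ℤ => PhiInv Φ (1 / μ (zIter φ ψ (-n) ⁻¹' W))) := by
      refine ⟨0, ?_⟩
      rintro x ⟨n, rfl⟩
      exact hanonneg n
    have hup : ∀ m : ℤ, ε ≤ PhiInv Φ (1 / μ (zIter φ ψ (-m) ⁻¹' W)) := fun m => ciInf_le hbb m
    have hext : ∀ m : ℤ, ∃ x : ℝ,
        (0 ≤ x ∧ Φ x ≤ 1 / μ (zIter φ ψ (-m) ⁻¹' W)) ∧ ε/2 < x := by
      intro m
      have hbdd : BddAbove {x : ℝ | 0 ≤ x ∧ Φ x ≤ 1 / μ (zIter φ ψ (-m) ⁻¹' W)} := by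
        by_contra hc
        have h0 : PhiInv Φ (1 / μ (zIter φ ψ (-m) ⁻¹' W)) = 0 :=
          Real.sSup_of_not_bddAbove hc
        have := hup m
        rw [h0] at this
        linarith
      have h0S : (0:ℝ) ∈ {x : ℝ | 0 ≤ x ∧ Φ x ≤ 1 / μ (zIter φ ψ (-m) ⁻¹' W)} :=
        ⟨le_rfl, by simp [hΦ.map_zero]⟩
      have hlt : ε/2 < sSup {x : ℝ | 0 ≤ x ∧ Φ x ≤ 1 / μ (zIter φ ψ (-m) ⁻¹' W)} :=
        lt_of_lt_of_le (by linarith) (hup m)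
      obtain ⟨x, hxS, hx⟩ := exists_lt_of_lt_csSup ⟨0, h0S⟩ hlt
      exact ⟨x, hxS, hx⟩
    obtain ⟨x₀, hx₀S, hx₀⟩ := hext 0
    have hzz : zIter φ ψ (-(0:ℤ)) ⁻¹' W = W := by
      rw [neg_zero, Aux.zIter_zero, Set.preimage_id]
    rw [hzz] at hx₀S
    have hx₀pos : 0 < x₀ := by linarith
    have hone : ∀ (b : ℝ≥0∞), (1/b) * b ≤ 1 := by
      intro b
      rw [div_eq_mul_inv, one_mul]
      exact ENNReal.inv_mul_le_one b
    have hμW1 : Φ x₀ * μ W ≤ 1 :=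
      le_trans (mul_le_mul_left hx₀S.2 _) (hone (μ W))
    have hmem : MemOrlicz Φ μ (W.indicator fun _ => (1:ℝ)) := by
      refine ⟨measurable_const.indicator hW, x₀, hx₀pos, ?_⟩
      rw [Aux.lintegral_phi_ind_mul hΦ hW]
      exact lt_of_le_of_lt hμW1 one_lt_top
    have hnz : ¬ ((W.indicator fun _ => (1:ℝ)) =ᵐ[μ] 0) := by
      intro h
      have h0 : μ {x | W.indicator (fun _ => (1:ℝ)) x ≠ 0} = 0 := by
        rw [EventuallyEq, ae_iff] at h
        simpa using h
      have hsub : W ⊆ {x | W.indicator (fun _ => (1:ℝ)) x ≠ 0} := by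
        intro x hx
        simp only [Set.mem_setOf_eq, Set.indicator_of_mem hx]
        norm_num
      exact hW0.ne' (measure_mono_null hsub h0)
    obtain ⟨n, hn⟩ := hexp _ hmem hnz (2/ε + 1)
    have hcomp : (W.indicator fun _ => (1:ℝ)) ∘ (zIter φ ψ n)
        = (zIter φ ψ n ⁻¹' W).indicator (fun _ => (1:ℝ)) := by
      funext x
      by_cases hx : zIter φ ψ n x ∈ W
      · simp [Function.comp_apply, Set.indicator_of_mem, hx]
      · simp [Function.comp_apply, Set.indicator_of_notMem, hx]
    rw [hcomp] at hn
    have hn' : 2/ε + 1 ≤ NInd Φ μ (zIter φ ψ n ⁻¹' W) := hn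
    obtain ⟨x, hxS, hxgt⟩ := hext (-n)
    rw [neg_neg] at hxS
    have hxpos : 0 < x := by linarith
    have hΦx : Φ x * μ (zIter φ ψ n ⁻¹' W) ≤ 1 :=
      le_trans (mul_le_mul_left hxS.2 _) (hone _)
    have h1 : NInd Φ μ (zIter φ ψ n ⁻¹' W) ≤ 1/x :=
      Aux.NInd_le hΦ ((Aux.zIter_measurable hφ hψ n) hW) hxpos hΦx
    have h2 : 1/x ≤ 2/ε := by
      rw [div_le_div_iff₀ hxpos hεpos]
      linarith
    linarith
  · -- inf = 0 → expansive
    intro hinf f hf hf0 M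
    obtain ⟨hfm, k₀, hk₀, hint⟩ := hf
    have hΦmeas := Aux.phi_measurable hΦ
    have hgm : Measurable (fun x => Φ (k₀ * f x)) := hΦmeas.comp (hfm.const_mul k₀)
    have hae : ∀ᵐ x ∂μ, Φ (k₀ * f x) < ⊤ := ae_lt_top hgm hint.ne
    have hA0 : 0 < μ {x | f x ≠ 0} := by
      rw [pos_iff_ne_zero]
      intro h0
      apply hf0
      rw [EventuallyEq, ae_iff]
      simpa using h0
    have hbad : μ {x | ¬ (Φ (k₀ * f x) < ⊤)} = 0 := by rwa [ae_iff] at hae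
    have hsub : {x | f x ≠ 0} ⊆
        ({x | f x ≠ 0} ∩ {x | Φ (k₀ * f x) < ⊤}) ∪ {x | ¬ (Φ (k₀ * f x) < ⊤)} := by
      intro x hx
      by_cases hb : Φ (k₀ * f x) < ⊤
      · exact Or.inl ⟨hx, hb⟩
      · exact Or.inr hb
    have hpos2 : μ ({x | f x ≠ 0} ∩ {x | Φ (k₀ * f x) < ⊤}) ≠ 0 := by
      intro hc
      have h1 := (measure_mono (μ := μ) hsub).trans (measure_union_le _ _)
      rw [hc, hbad, add_zero] at h1
      exact hA0.ne' (le_antisymm h1 zero_le)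
    obtain ⟨x₀pt, hx₀pt⟩ := nonempty_of_measure_ne_zero hpos2
    set x₁ := |k₀ * f x₀pt| with hx₁def
    have hx₁ : 0 < x₁ := abs_pos.2 (mul_ne_zero hk₀.ne' hx₀pt.1)
    have hΦx₁ : Φ x₁ ≠ ⊤ := by
      rw [hx₁def, Aux.phi_abs hΦ]
      exact hx₀pt.2.ne
    -- find δ and j
    have hUnion : {x | f x ≠ 0} = ⋃ m : ℕ, {x | 1/(m+1 : ℝ) < |f x|} := by
      ext x
      simp only [Set.mem_setOf_eq, Set.mem_iUnion]
      constructor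
      · intro hx
        obtain ⟨m, hm⟩ := exists_nat_one_div_lt (abs_pos.2 hx)
        exact ⟨m, by exact_mod_cast hm⟩
      · rintro ⟨m, hm⟩ h0
        rw [h0, abs_zero] at hm
        have : (0:ℝ) < 1/(m+1:ℝ) := by positivity
        linarith
    obtain ⟨m₀, hm₀⟩ : ∃ m : ℕ, μ {x | 1/(m+1:ℝ) < |f x|} ≠ 0 := by
      by_contra hc
      push_neg at hc
      rw [hUnion] at hA0
      exact hA0.ne' (measure_iUnion_null hc)
    set δ := 1/(m₀+1:ℝ) with hδdef
    have hδ : 0 < δ := by positivity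
    set B := {x | δ < |f x|} with hBdef
    have hBm : MeasurableSet B := measurableSet_lt measurable_const hfm.abs
    obtain ⟨j, hj⟩ : ∃ j : ℤ, μ (B ∩ zIter φ ψ (-j) ⁻¹' W) ≠ 0 := by
      by_contra hc
      push_neg at hc
      apply hm₀
      have hBU : B = ⋃ j : ℤ, (B ∩ zIter φ ψ (-j) ⁻¹' W) := by
        ext x
        simp only [Set.mem_iUnion, Set.mem_inter_iff]
        constructor
        · intro hx
          obtain ⟨k, hk⟩ := hcover x
          exact ⟨k, hx, hk⟩
        · rintro ⟨k, hk, _⟩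
          exact hk
      calc μ {x | 1/(m₀+1:ℝ) < |f x|} = μ B := rfl
        _ = μ (⋃ j : ℤ, (B ∩ zIter φ ψ (-j) ⁻¹' W)) := by rw [← hBU]
        _ = 0 := measure_iUnion_null hc
    set F' := B ∩ zIter φ ψ (-j) ⁻¹' W with hF'def
    have hF'm : MeasurableSet F' := hBm.inter ((Aux.zIter_measurable hφ hψ (-j)) hW)
    set F := zIter φ ψ j ⁻¹' F' with hFdef
    have hFm : MeasurableSet F := (Aux.zIter_measurable hφ hψ j) hF'm
    have hFW : F ⊆ W := by
      intro x hx
      have h2 : zIter φ ψ (-j) (zIter φ ψ j x) ∈ W := hx.2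
      rw [Aux.zIter_apply_zIter hinv₁ hinv₂, neg_add_cancel, Aux.zIter_zero] at h2
      exact h2
    have hF'eq : F' = zIter φ ψ (-j) ⁻¹' F := by
      rw [hFdef, Aux.zIter_preimage_comp hinv₁ hinv₂ j (-j), add_neg_cancel,
        Aux.zIter_zero, Set.preimage_id]
    have hF'pos : 0 < μ F' := pos_iff_ne_zero.2 hj
    have hFpos : 0 < μ F := by
      rw [pos_iff_ne_zero]
      intro h0
      have hb := Aux.zIter_bound hφ hψ hbound hbound' (-j) F hFm
      rw [← hF'eq, h0, mul_zero] at hb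
      exact hF'pos.ne' (le_antisymm hb zero_le)
    have hFT : μ F < ⊤ := lt_of_le_of_lt (measure_mono hFW) hW1
    have hNW : 0 < NInd Φ μ W := Aux.NInd_pos hΦ hx₁ hΦx₁ hW hW0 hW1
    have hNF : 0 < NInd Φ μ F := Aux.NInd_pos hΦ hx₁ hΦx₁ hFm hFpos hFT
    set c₁ := NInd Φ μ F / (K * NInd Φ μ W) with hc₁def
    have hc₁ : 0 < c₁ := div_pos hNF (mul_pos hK hNW)
    have hCT : (max c c' : ℝ≥0∞) ≠ ⊤ := (max_lt hcT hc'T).ne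
    have hSf : ∀ n : ℤ, ∃ k : ℝ, 0 < k ∧
        (∫⁻ x, Φ ((f ∘ zIter φ ψ n) x / k) ∂μ) ≤ 1 := by
      intro n
      have hI : (∫⁻ x, Φ (k₀ * f (zIter φ ψ n x)) ∂μ) < ⊤ :=
        lt_of_le_of_lt (Aux.lintegral_comp_zIter hφ hψ hbound hbound' n hgm)
          (ENNReal.mul_lt_top (ENNReal.pow_ne_top hCT).lt_top hint)
      set I := ∫⁻ x, Φ (k₀ * f (zIter φ ψ n x)) ∂μ with hIdef
      set r := I.toReal + 1 with hrdef
      have hr1 : 1 ≤ r := le_add_of_nonneg_left ENNReal.toReal_nonneg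
      have hrpos : 0 < r := lt_of_lt_of_le one_pos hr1
      refine ⟨r / k₀, by positivity, ?_⟩
      have hpt : ∀ x, Φ ((f ∘ zIter φ ψ n) x / (r / k₀))
          ≤ ENNReal.ofReal (1/r) * Φ (k₀ * f (zIter φ ψ n x)) := by
        intro x
        have h1 : (f ∘ zIter φ ψ n) x / (r / k₀) = (1/r) * (k₀ * f (zIter φ ψ n x)) := by
          rw [Function.comp_apply]
          field_simp
        rw [h1]
        exact Aux.phi_smul hΦ _ (by positivity) (by rw [div_le_one hrpos]; linarith)
      calc (∫⁻ x, Φ ((f ∘ zIter φ ψ n) x / (r / k₀)) ∂μ)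
          ≤ ∫⁻ x, ENNReal.ofReal (1/r) * Φ (k₀ * f (zIter φ ψ n x)) ∂μ := lintegral_mono hpt
        _ = ENNReal.ofReal (1/r) * I := lintegral_const_mul' _ _ ENNReal.ofReal_ne_top
        _ ≤ 1 := by
            rw [← ENNReal.ofReal_toReal hI.ne, ← ENNReal.ofReal_mul (by positivity)]
            apply ENNReal.ofReal_le_one.2
            have hIle : I.toReal ≤ r := by rw [hrdef]; linarith
            calc (1/r) * I.toReal = I.toReal / r := by ring
              _ ≤ 1 := (div_le_one hrpos).2 hIle
    set M' := max M 1 with hM'def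
    have hM' : 0 < M' := lt_of_lt_of_le one_pos (le_max_right _ _)
    have hε' : 0 < δ * c₁ / M' := by positivity
    obtain ⟨m, hm⟩ := exists_lt_of_ciInf_lt
      (show (⨅ n : ℤ, PhiInv Φ (1 / μ (zIter φ ψ (-n) ⁻¹' W))) < δ * c₁ / M' by
        rw [hinf]; exact hε')
    have hWmMeas : MeasurableSet (zIter φ ψ (-m) ⁻¹' W) :=
      (Aux.zIter_measurable hφ hψ (-m)) hW
    have hWmpos : 0 < μ (zIter φ ψ (-m) ⁻¹' W) := by
      rw [pos_iff_ne_zero]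
      intro h0
      have hb := Aux.zIter_bound_rev hinv₁ hinv₂ hφ hψ hbound hbound' (-m) W hW
      rw [h0, mul_zero] at hb
      exact hW0.ne' (le_antisymm hb zero_le)
    have hWmT : μ (zIter φ ψ (-m) ⁻¹' W) < ⊤ :=
      lt_of_le_of_lt (Aux.zIter_bound hφ hψ hbound hbound' (-m) W hW)
        (ENNReal.mul_lt_top (ENNReal.pow_ne_top hCT).lt_top hW1)
    have ham_pos : 0 < PhiInv Φ (1 / μ (zIter φ ψ (-m) ⁻¹' W)) :=
      Aux.PhiInv_pos hΦ hx₁ hΦx₁ (ENNReal.div_pos one_ne_zero hWmT.ne)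
        (ENNReal.div_lt_top one_ne_top hWmpos.ne')
    have hNu : 1 / PhiInv Φ (1 / μ (zIter φ ψ (-m) ⁻¹' W)) ≤ NInd Φ μ (zIter φ ψ (-m) ⁻¹' W) :=
      Aux.NInd_ge hΦ hx₁ hΦx₁ hWmMeas hWmpos hWmT
    obtain ⟨hd1, _⟩ := hdistortion (-m) F hFm hFW hFpos
    have hv : c₁ * NInd Φ μ (zIter φ ψ (-m) ⁻¹' W) ≤ NInd Φ μ (zIter φ ψ (-m) ⁻¹' F) := by
      have h2 := mul_le_mul_of_nonneg_left hd1 hNF.le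
      have h3 : NInd Φ μ F * (NInd Φ μ (zIter φ ψ (-m) ⁻¹' F) / NInd Φ μ F)
          = NInd Φ μ (zIter φ ψ (-m) ⁻¹' F) := by
        field_simp
      have h4 : NInd Φ μ F * (1 / K * (NInd Φ μ (zIter φ ψ (-m) ⁻¹' W) / NInd Φ μ W))
          = c₁ * NInd Φ μ (zIter φ ψ (-m) ⁻¹' W) := by
        rw [hc₁def]
        field_simp
      rw [h3, h4] at h2
      exact h2
    refine ⟨j - m, ?_⟩
    have hAeq : zIter φ ψ (j - m) ⁻¹' F' = zIter φ ψ (-m) ⁻¹' F := by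
      rw [hF'eq, Aux.zIter_preimage_comp hinv₁ hinv₂ (-j) (j - m)]
      have : (-j) + (j - m) = -m := by ring
      rw [this]
    have hpt : ∀ x ∈ zIter φ ψ (-m) ⁻¹' F, δ ≤ |(f ∘ zIter φ ψ (j - m)) x| := by
      intro x hx
      rw [← hAeq] at hx
      have hxF' : zIter φ ψ (j - m) x ∈ F' := hx
      exact le_of_lt hxF'.1
    have hlow : δ * NInd Φ μ (zIter φ ψ (-m) ⁻¹' F) ≤ LuxNorm Φ μ (f ∘ zIter φ ψ (j - m)) :=
      Aux.lux_lower hΦ ((Aux.zIter_measurable hφ hψ (-m)) hFm) hδ hpt (hSf (j - m))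
    -- final chain
    have hq1 : M'/(δ*c₁) < 1 / PhiInv Φ (1 / μ (zIter φ ψ (-m) ⁻¹' W)) := by
      have := one_div_lt_one_div_of_lt ham_pos hm
      rwa [one_div_div] at this
    have e1 : δ*c₁*(M'/(δ*c₁)) = M' := by field_simp
    have e2 : δ*c₁*(M'/(δ*c₁)) < δ*c₁*(1 / PhiInv Φ (1 / μ (zIter φ ψ (-m) ⁻¹' W))) :=
      mul_lt_mul_of_pos_left hq1 (by positivity)
    have e3 : δ*c₁*(1 / PhiInv Φ (1 / μ (zIter φ ψ (-m) ⁻¹' W)))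
        ≤ δ*c₁*(NInd Φ μ (zIter φ ψ (-m) ⁻¹' W)) :=
      mul_le_mul_of_nonneg_left hNu (by positivity)
    have e4 : δ*(c₁*(NInd Φ μ (zIter φ ψ (-m) ⁻¹' W)))
        ≤ δ*(NInd Φ μ (zIter φ ψ (-m) ⁻¹' F)) :=
      mul_le_mul_of_nonneg_left hv hδ.le
    have e5 : δ*c₁*(NInd Φ μ (zIter φ ψ (-m) ⁻¹' W))
        = δ*(c₁*(NInd Φ μ (zIter φ ψ (-m) ⁻¹' W))) := mul_assoc _ _ _
    have e6 : M ≤ M' := le_max_left _ _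
    linarith
end
end
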